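/- arXiv:1903.10083 — 7 statements merged into one kernel-verified Lean document; each statement's English description precedes it below -/
import Mathlib

section
/- Let k ≥ 0 be an integer and let P and Q be Borel probability measures on ℝ with ∫|x|^k dP(x) < ∞ and ∫|x|^k dQ(x) < ∞. If ∫ (x−t)_+^k dP(x) = ∫ (x−t)_+^k dQ(x) for every t ≥ 0 and ∫ (t−x)_+^k dP(x) = ∫ (t−x)_+^k dQ(x) for every t ≤ 0, then P = Q. -/
/-!
Write `F_j(t) = ∫ (x - t)_+^j dμ(x)`. For `b ≤ a` one has
`(j+1)(a-b) b_+^j ≤ a_+^(j+1) - b_+^(j+1) ≤ (j+1)(a-b) a_+^j`, so for `t < s` the difference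
`F_{j+1}(t) - F_{j+1}(s)` lies between `(j+1)(s-t) F_j(s)` and `(j+1)(s-t) F_j(t)`. Comparing these
bounds for `P` and `Q` and letting `s ↓ t` (`F_j` is right-continuous) shows that if `F_{j+1}` agrees
for `P` and `Q` on `[0, ∞)`, then so does `F_j`. Descending to `j = 0` gives `P (t, ∞) = Q (t, ∞)`
for `t ≥ 0`; the same argument applied to the reflected measures gives `P (-∞, t) = Q (-∞, t)` for
`t ≤ 0`, and these values determine a probability measure on `ℝ`.
-/

open MeasureTheory Filter Set

/-- Truncated power function `(a)_+^k`, with the convention that `(a)_+^0` is the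
indicator `1{a > 0}`. -/
noncomputable def truncPow (k : ℕ) (a : ℝ) : ℝ :=
  if k = 0 then (if 0 < a then 1 else 0) else (max a 0) ^ k

open Topology

section TruncPow

variable {j k : ℕ} {a b : ℝ}

theorem truncPow_eq_ite (k : ℕ) (a : ℝ) : truncPow k a = if 0 < a then a ^ k else 0 := by
  rcases eq_or_ne k 0 with rfl | hk
  · simp [truncPow]
  · simp only [truncPow, if_neg hk]
    split_ifs with ha
    · rw [max_eq_left ha.le]
    · rw [max_eq_right (not_lt.1 ha), zero_pow hk]

theorem truncPow_of_pos (k : ℕ) (ha : 0 < a) : truncPow k a = a ^ k := by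
  rw [truncPow_eq_ite, if_pos ha]

theorem truncPow_of_nonpos (k : ℕ) (ha : a ≤ 0) : truncPow k a = 0 := by
  rw [truncPow_eq_ite, if_neg ha.not_gt]

theorem truncPow_nonneg (k : ℕ) (a : ℝ) : 0 ≤ truncPow k a := by
  rw [truncPow_eq_ite]
  split_ifs with ha
  exacts [pow_nonneg ha.le k, le_rfl]

theorem monotone_truncPow (k : ℕ) : Monotone (truncPow k) := by
  intro a b hab
  rcases le_or_gt a 0 with ha | ha
  · rw [truncPow_of_nonpos k ha]
    exact truncPow_nonneg k b
  · rw [truncPow_of_pos k ha, truncPow_of_pos k (ha.trans_le hab)]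
    exact pow_le_pow_left₀ ha.le hab k

theorem measurable_truncPow (k : ℕ) : Measurable (truncPow k) := by
  rw [funext (truncPow_eq_ite k)]
  exact Measurable.ite measurableSet_Ioi (measurable_id.pow_const k) measurable_const

theorem continuousWithinAt_truncPow_Iic (k : ℕ) (a : ℝ) :
    ContinuousWithinAt (truncPow k) (Iic a) a := by
  rcases le_or_gt a 0 with ha | ha
  · refine continuousWithinAt_const.congr (fun x hx => ?_) (truncPow_of_nonpos k ha)
    exact truncPow_of_nonpos k (le_trans hx ha)
  · refine ((continuous_pow k).continuousAt.congr ?_).continuousWithinAt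
    filter_upwards [lt_mem_nhds ha] with x hx using (truncPow_of_pos k hx).symm

theorem truncPow_le_one_add_abs_pow (hjk : j ≤ k) (a : ℝ) : truncPow j a ≤ 1 + |a| ^ k := by
  rcases le_or_gt a 0 with ha | ha
  · rw [truncPow_of_nonpos j ha]
    positivity
  rw [truncPow_of_pos j ha, abs_of_pos ha]
  rcases le_total a 1 with ha1 | ha1
  · linarith [pow_le_one₀ ha.le ha1 (n := j), pow_nonneg ha.le k]
  · linarith [pow_le_pow_right₀ ha1 hjk]

theorem pow_succ_sub_pow_succ_mem_Icc (n : ℕ) (hb : 0 ≤ b) (hba : b ≤ a) :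
    a ^ (n + 1) - b ^ (n + 1) ∈ Icc ((n + 1) * (a - b) * b ^ n) ((n + 1) * (a - b) * a ^ n) := by
  have ha : 0 ≤ a := hb.trans hba
  have hterm : ∀ i ∈ Finset.range (n + 1),
      b ^ n ≤ a ^ i * b ^ (n + 1 - 1 - i) ∧ a ^ i * b ^ (n + 1 - 1 - i) ≤ a ^ n := by
    intro i hi
    have hin : i + (n - i) = n := Nat.add_sub_cancel' (Nat.lt_succ_iff.1 (Finset.mem_range.1 hi))
    rw [Nat.add_sub_cancel]
    constructor
    · calc b ^ n = b ^ i * b ^ (n - i) := by rw [← pow_add, hin]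
        _ ≤ a ^ i * b ^ (n - i) := by gcongr
    · calc a ^ i * b ^ (n - i) ≤ a ^ i * a ^ (n - i) := by gcongr
        _ = a ^ n := by rw [← pow_add, hin]
  have hlow := Finset.card_nsmul_le_sum _ _ _ fun i hi => (hterm i hi).1
  have hupp := Finset.sum_le_card_nsmul _ _ _ fun i hi => (hterm i hi).2
  rw [Finset.card_range, nsmul_eq_mul, Nat.cast_succ] at hlow hupp
  have hab : 0 ≤ a - b := sub_nonneg.2 hba
  rw [← geom_sum₂_mul]
  constructor
  · nlinarith
  · nlinarith

theorem truncPow_succ_sub_truncPow_succ_mem_Icc (j : ℕ) (hba : b ≤ a) :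
    truncPow (j + 1) a - truncPow (j + 1) b ∈
      Icc ((j + 1) * (a - b) * truncPow j b) ((j + 1) * (a - b) * truncPow j a) := by
  rcases le_or_gt a 0 with ha | ha
  · simp [truncPow_of_nonpos _ ha, truncPow_of_nonpos _ (hba.trans ha)]
  rcases le_or_gt b 0 with hb | hb
  · rw [truncPow_of_nonpos _ hb, truncPow_of_nonpos _ hb, truncPow_of_pos _ ha,
      truncPow_of_pos _ ha, sub_zero, mul_zero]
    refine ⟨by positivity, ?_⟩
    have hcoef : a ≤ (j + 1) * (a - b) := by nlinarith [j.cast_nonneg (α := ℝ)]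
    rw [pow_succ']
    exact mul_le_mul_of_nonneg_right hcoef (by positivity)
  · simp only [truncPow_of_pos _ ha, truncPow_of_pos _ hb]
    exact pow_succ_sub_pow_succ_mem_Icc j hb.le hba

end TruncPow

noncomputable def truncMoment (j : ℕ) (μ : Measure ℝ) (t : ℝ) : ℝ :=
  ∫ x, truncPow j (x - t) ∂μ

theorem truncMoment_map_neg (j : ℕ) (μ : Measure ℝ) (t : ℝ) :
    truncMoment j (μ.map (MeasurableEquiv.neg ℝ)) t = ∫ x, truncPow j (-t - x) ∂μ := by
  rw [truncMoment, integral_map_equiv]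
  simp only [MeasurableEquiv.neg_apply, neg_sub_comm]

theorem integrable_abs_pow_map_neg {k : ℕ} {μ : Measure ℝ}
    (hμ : Integrable (fun x => |x| ^ k) μ) :
    Integrable (fun x => |x| ^ k) (μ.map (MeasurableEquiv.neg ℝ)) := by
  rw [integrable_map_equiv]
  simpa [Function.comp_def] using hμ

section TruncMoment

variable {j k : ℕ} {μ ν : Measure ℝ} [IsFiniteMeasure μ] [IsFiniteMeasure ν] {s t : ℝ}

theorem integrable_truncPow_sub (hμ : Integrable (fun x => |x| ^ k) μ) (hjk : j ≤ k)
    (ht : 0 ≤ t) : Integrable (fun x => truncPow j (x - t)) μ := by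
  refine ((integrable_const 1).add hμ).mono'
    ((measurable_truncPow j).comp (measurable_sub_const t)).aestronglyMeasurable
    (ae_of_all _ fun x => ?_)
  rw [Real.norm_of_nonneg (truncPow_nonneg j _)]
  exact (monotone_truncPow j (sub_le_self x ht)).trans (truncPow_le_one_add_abs_pow hjk x)

theorem tendsto_truncMoment_nhdsGT (hμ : Integrable (fun x => |x| ^ k) μ) (hjk : j ≤ k)
    (ht : 0 ≤ t) : Tendsto (truncMoment j μ) (𝓝[>] t) (𝓝 (truncMoment j μ t)) := by
  refine tendsto_integral_filter_of_dominated_convergence (fun x => truncPow j (x - t))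
    (Eventually.of_forall fun s =>
      ((measurable_truncPow j).comp (measurable_sub_const s)).aestronglyMeasurable)
    (eventually_nhdsWithin_of_forall fun s (hs : t < s) => ae_of_all _ fun x => ?_)
    (integrable_truncPow_sub hμ hjk ht) (ae_of_all _ fun x => ?_)
  · rw [Real.norm_of_nonneg (truncPow_nonneg j _)]
    exact monotone_truncPow j (by linarith)
  · have hsub : Tendsto (fun s => x - s) (𝓝[>] t) (𝓝[≤] (x - t)) :=
      tendsto_nhdsWithin_of_tendsto_nhds_of_eventually_within _
        ((continuous_sub_left x).tendsto t |>.mono_left nhdsWithin_le_nhds)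
        (eventually_nhdsWithin_of_forall fun s (hs : t < s) => by
          simp only [mem_Iic]; linarith)
    exact (continuousWithinAt_truncPow_Iic j (x - t)).tendsto.comp hsub

theorem truncMoment_succ_sub_truncMoment_succ_mem_Icc (hμ : Integrable (fun x => |x| ^ k) μ)
    (hjk : j + 1 ≤ k) (ht : 0 ≤ t) (hts : t ≤ s) :
    truncMoment (j + 1) μ t - truncMoment (j + 1) μ s ∈
      Icc ((j + 1) * (s - t) * truncMoment j μ s) ((j + 1) * (s - t) * truncMoment j μ t) := by
  have hit := integrable_truncPow_sub hμ hjk ht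
  have his := integrable_truncPow_sub hμ hjk (ht.trans hts)
  have hpoint (x : ℝ) := truncPow_succ_sub_truncPow_succ_mem_Icc j (sub_le_sub_left hts x)
  simp only [sub_sub_sub_cancel_left] at hpoint
  unfold truncMoment
  rw [← integral_sub hit his, ← integral_const_mul, ← integral_const_mul]
  exact ⟨integral_mono ((integrable_truncPow_sub hμ (by omega) (ht.trans hts)).const_mul _)
      (hit.sub his) fun x => (hpoint x).1,
    integral_mono (hit.sub his) ((integrable_truncPow_sub hμ (by omega) ht).const_mul _)
      fun x => (hpoint x).2⟩

theorem truncMoment_le_of_truncMoment_succ_eq (hμ : Integrable (fun x => |x| ^ k) μ)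
    (hν : Integrable (fun x => |x| ^ k) ν) (hjk : j + 1 ≤ k)
    (h : ∀ t, 0 ≤ t → truncMoment (j + 1) μ t = truncMoment (j + 1) ν t) (ht : 0 ≤ t) :
    truncMoment j μ t ≤ truncMoment j ν t := by
  refine le_of_tendsto (tendsto_truncMoment_nhdsGT hμ (by omega) ht) ?_
  filter_upwards [self_mem_nhdsWithin] with s (hs : t < s)
  have hμs := (truncMoment_succ_sub_truncMoment_succ_mem_Icc hμ hjk ht hs.le).1
  have hνs := (truncMoment_succ_sub_truncMoment_succ_mem_Icc hν hjk ht hs.le).2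
  rw [h t ht, h s (ht.trans hs.le)] at hμs
  have hpos : (0 : ℝ) < (j + 1) * (s - t) := by have := sub_pos.2 hs; positivity
  exact le_of_mul_le_mul_left (hμs.trans hνs) hpos

theorem truncMoment_eq_of_le (hμ : Integrable (fun x => |x| ^ k) μ)
    (hν : Integrable (fun x => |x| ^ k) ν)
    (h : ∀ t, 0 ≤ t → truncMoment k μ t = truncMoment k ν t) (hjk : j ≤ k) :
    ∀ t, 0 ≤ t → truncMoment j μ t = truncMoment j ν t := by
  refine Nat.decreasingInduction
    (motive := fun j _ => ∀ t, 0 ≤ t → truncMoment j μ t = truncMoment j ν t)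
    (fun j hjk ih => ?_) h hjk
  exact fun t ht => le_antisymm (truncMoment_le_of_truncMoment_succ_eq hμ hν hjk ih ht)
    (truncMoment_le_of_truncMoment_succ_eq hν hμ hjk (fun t ht => (ih t ht).symm) ht)

theorem truncMoment_zero (μ : Measure ℝ) (t : ℝ) : truncMoment 0 μ t = μ.real (Ioi t) := by
  rw [← integral_indicator_one measurableSet_Ioi, truncMoment]
  congr 1 with x
  by_cases hx : t < x <;> simp [truncPow, hx]

theorem measure_Ioi_eq_of_truncMoment_eq (hμ : Integrable (fun x => |x| ^ k) μ)
    (hν : Integrable (fun x => |x| ^ k) ν)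
    (h : ∀ t, 0 ≤ t → truncMoment k μ t = truncMoment k ν t) (ht : 0 ≤ t) :
    μ (Ioi t) = ν (Ioi t) := by
  have h0 := truncMoment_eq_of_le hμ hν h k.zero_le t ht
  rw [truncMoment_zero, truncMoment_zero] at h0
  exact (ENNReal.toReal_eq_toReal_iff' (measure_ne_top μ _) (measure_ne_top ν _)).1 h0

theorem measure_Iio_eq_of_truncMoment_eq (hμ : Integrable (fun x => |x| ^ k) μ)
    (hν : Integrable (fun x => |x| ^ k) ν)
    (h : ∀ t, t ≤ 0 → ∫ x, truncPow k (t - x) ∂μ = ∫ x, truncPow k (t - x) ∂ν) (ht : t ≤ 0) :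
    μ (Iio t) = ν (Iio t) := by
  have hneg := measure_Ioi_eq_of_truncMoment_eq (integrable_abs_pow_map_neg hμ)
    (integrable_abs_pow_map_neg hν)
    (fun s hs => by rw [truncMoment_map_neg, truncMoment_map_neg]; exact h (-s) (by linarith))
    (neg_nonneg.2 ht)
  rw [MeasurableEquiv.map_apply, MeasurableEquiv.map_apply] at hneg
  simpa using hneg

end TruncMoment

theorem MeasureTheory.Measure.ext_of_Ioi_of_Iio {μ ν : Measure ℝ} [IsFiniteMeasure μ]
    [IsFiniteMeasure ν] (huniv : μ univ = ν univ) (hIoi : ∀ t, 0 ≤ t → μ (Ioi t) = ν (Ioi t))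
    (hIio : ∀ t, t ≤ 0 → μ (Iio t) = ν (Iio t)) : μ = ν := by
  refine Measure.ext_of_Iic μ ν fun t => ?_
  rcases le_or_gt 0 t with ht | ht
  · rw [← compl_Ioi, measure_compl measurableSet_Ioi (measure_ne_top _ _),
      measure_compl measurableSet_Ioi (measure_ne_top _ _), huniv, hIoi t ht]
  have hlim (ρ : Measure ℝ) [IsFiniteMeasure ρ] :
      Tendsto (fun s => ρ (Iio s)) (𝓝[>] t) (𝓝 (ρ (Iic t))) := by
    have := tendsto_measure_biInter_gt (μ := ρ) (s := Iio) (a := t)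
      (fun r _ => measurableSet_Iio.nullMeasurableSet) (fun i j _ hij => Iio_subset_Iio hij)
      ⟨t + 1, by linarith, measure_ne_top _ _⟩
    have hInter : (⋂ r > t, Iio r) = Iic t := by ext x; simp [forall_gt_iff_le]
    rwa [hInter] at this
  refine tendsto_nhds_unique ((hlim μ).congr' ?_) (hlim ν)
  filter_upwards [Ioo_mem_nhdsGT ht] with s hs using hIio s hs.2.le

theorem stmt1 (k : ℕ) (P Q : Measure ℝ)
    [IsProbabilityMeasure P] [IsProbabilityMeasure Q]
    (hP : Integrable (fun x : ℝ => |x| ^ k) P)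
    (hQ : Integrable (fun x : ℝ => |x| ^ k) Q)
    (h1 : ∀ t : ℝ, 0 ≤ t → (∫ x, truncPow k (x - t) ∂P) = ∫ x, truncPow k (x - t) ∂Q)
    (h2 : ∀ t : ℝ, t ≤ 0 → (∫ x, truncPow k (t - x) ∂P) = ∫ x, truncPow k (t - x) ∂Q) :
    P = Q :=
  Measure.ext_of_Ioi_of_Iio (by simp)
    (fun _ => measure_Ioi_eq_of_truncMoment_eq hP hQ h1)
    (fun _ => measure_Iio_eq_of_truncMoment_eq hP hQ h2)
end

section
/- Let k ≥ 1 be an integer, and let x_1,…,x_m and y_1,…,y_n be real numbers (m, n ≥ 1). Then sup_{f ∈ F_k} |(1/m)∑_{i=1}^m f(x_i) − (1/n)∑_{j=1}^n f(y_j)| = max{ sup_{t ≥ 0} (1/k!)|(1/m)∑_{i=1}^m (x_i−t)_+^k − (1/n)∑_{j=1}^n (y_j−t)_+^k| , sup_{t ≤ 0} (1/k!)|(1/m)∑_{i=1}^m (t−x_i)_+^k − (1/n)∑_{j=1}^n (t−y_j)_+^k| }. -/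
/-!
Write `f(z) = ∫ w_z h` with `w_z` the Taylor kernel `(z - s)^(k-1)/(k-1)!` restricted, with
orientation, to the interval between `0` and `z`. The functional
`f ↦ (1/m) ∑ f(xᵢ) - (1/n) ∑ f(yⱼ)` then becomes `h ↦ ∫ W h` for one integrable weight `W`,
whose tail integrals `∫_{t}^{∞} W` (`t ≥ 0`) and `∫_{-∞}^{t} W` (`t ≤ 0`) are exactly the
truncated-power expressions of the right-hand side, up to the factor `±1/k!`.

Upper bound: write `h = p - q` with `p, q` monotone and `p + q` the variation of `h`. When
`h(0+) = 0`, the right-continuous versions `P, Q` of `p, q` satisfy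
`h = (P - P 0) - (Q - Q 0)` a.e., so by Fubini `∫ W h = ∫ T dP - ∫ T dQ` where `T(t)` is a
tail integral of `W`; as the Stieltjes measures of `P` and `Q` have total mass at most
`TV(h) ≤ 1`, `|∫ W h| ≤ sup |T|`. The case `h(0-) = 0` follows by reflecting `s ↦ -s`.

Lower bound: the steps `h = 𝟙_{(t,∞)}` (`t ≥ 0`) and `h = -𝟙_{(-∞,t)}` (`t ≤ 0`) lie in the
class and attain each tail integral.
-/

open MeasureTheory Filter Set

/-- The class `F_k`: functions `f(x) = ∫_0^x ((x-s)^(k-1)/(k-1)!) h(s) ds` for some `h`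
with total variation at most 1 over ℝ and with a one-sided limit 0 at 0 (from the right
or from the left). -/
def Fk (k : ℕ) : Set (ℝ → ℝ) :=
  {f | ∃ h : ℝ → ℝ, eVariationOn h Set.univ ≤ 1 ∧
    (Tendsto h (nhdsWithin 0 (Set.Ioi 0)) (nhds 0) ∨
     Tendsto h (nhdsWithin 0 (Set.Iio 0)) (nhds 0)) ∧
    ∀ x : ℝ, f x = ∫ s in (0:ℝ)..x, ((x - s) ^ (k - 1) / (Nat.factorial (k - 1) : ℝ)) * h s}

open scoped Topology Nat

section General

theorem intervalIntegral_eq_integral_indicator_sub {E : Type*} [NormedAddCommGroup E]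
    [NormedSpace ℝ E] {μ : Measure ℝ} {F : ℝ → E} {a b : ℝ}
    (hF : IntervalIntegrable F μ a b) :
    ∫ x in a..b, F x ∂μ = ∫ x, ((Ioc a b).indicator F x - (Ioc b a).indicator F x) ∂μ := by
  rw [integral_sub (hF.1.integrable_indicator measurableSet_Ioc)
    (hF.2.integrable_indicator measurableSet_Ioc), integral_indicator measurableSet_Ioc,
    integral_indicator measurableSet_Ioc, intervalIntegral]

theorem abs_setIntegral_le_integral_abs {X : Type*} [MeasurableSpace X] {μ : Measure X}
    {W : X → ℝ} (hW : Integrable W μ) (S : Set X) : |∫ s in S, W s ∂μ| ≤ ∫ s, |W s| ∂μ :=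
  abs_integral_le_integral_abs.trans
    (setIntegral_le_integral hW.abs (ae_of_all _ fun _ => abs_nonneg _))

theorem biSup_eq_max_ciSup {ι α β : Type*} [Nonempty α] {F : ι → ℝ} {s : Set ι} {A : α → ℝ}
    {B : β → ℝ} (hF : ∀ i, 0 ≤ F i) (hle : ∀ i ∈ s, F i ≤ max (⨆ a, A a) (⨆ b, B b))
    (hA : ∀ a, ∃ i ∈ s, A a ≤ F i) (hB : ∀ b, ∃ i ∈ s, B b ≤ F i) :
    ⨆ i ∈ s, F i = max (⨆ a, A a) (⨆ b, B b) := by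
  obtain ⟨i₀, hi₀, -⟩ := hA (Classical.arbitrary α)
  have hM : 0 ≤ max (⨆ a, A a) (⨆ b, B b) := (hF i₀).trans (hle i₀ hi₀)
  have hbdd : BddAbove (range fun i => ⨆ _ : i ∈ s, F i) :=
    ⟨_, forall_mem_range.2 fun i => Real.iSup_le (hle i) hM⟩
  have hmem {i : ι} (hi : i ∈ s) : F i ≤ ⨆ i ∈ s, F i :=
    (ciSup_pos hi).symm.trans_le (le_ciSup hbdd i)
  have hsup0 : 0 ≤ ⨆ i ∈ s, F i := Real.iSup_nonneg fun i => Real.iSup_nonneg fun _ => hF i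
  refine le_antisymm (Real.iSup_le (fun i => Real.iSup_le (hle i) hM) hM)
    (max_le (Real.iSup_le (fun a => ?_) hsup0) (Real.iSup_le (fun b => ?_) hsup0))
  · obtain ⟨i, hi, hAi⟩ := hA a
    exact hAi.trans (hmem hi)
  · obtain ⟨i, hi, hBi⟩ := hB b
    exact hBi.trans (hmem hi)

theorem Monotone.ae_rightLim_eq {μ : Measure ℝ} [NullSingletonClass μ] {f : ℝ → ℝ}
    (hf : Monotone f) : ∀ᵐ x ∂μ, Function.rightLim f x = f x := by
  have hcont : ∀ᵐ x ∂μ, ContinuousAt f x :=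
    ae_iff.2 (hf.countable_not_continuousAt.measure_zero μ)
  filter_upwards [hcont] with x hx
  exact hf.continuousWithinAt_Ioi_iff_rightLim_eq.1 hx.continuousWithinAt

theorem Monotone.eVariationOn_univ_le {α : Type*} [LinearOrder α] {f : α → ℝ} (hf : Monotone f)
    {a b : ℝ} (ha : ∀ x, a ≤ f x) (hb : ∀ x, f x ≤ b) :
    eVariationOn f univ ≤ ENNReal.ofReal (b - a) := by
  rw [eVariationOn.eq_biSup_inter_Icc]
  refine iSup₂_le fun p _ => ?_
  rw [(hf.monotoneOn univ).eVariationOn_eq trivial trivial]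
  exact ENNReal.ofReal_le_ofReal (by linarith [ha p.1, hb p.2])

theorem BoundedVariationOn.locallyIntegrable {μ : Measure ℝ} [IsLocallyFiniteMeasure μ]
    {h : ℝ → ℝ} (hh : BoundedVariationOn h univ) : LocallyIntegrable h μ := by
  obtain ⟨p, q, hp, hq, rfl⟩ := hh.locallyBoundedVariationOn.exists_monotoneOn_sub_monotoneOn
  exact (monotoneOn_univ.1 hp).locallyIntegrable.sub (monotoneOn_univ.1 hq).locallyIntegrable

theorem StieltjesFunction.measure_univ_le_ofReal (f : StieltjesFunction ℝ) {c : ℝ}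
    (hf : ∀ a b, a ≤ b → f b - f a ≤ c) : f.measure univ ≤ ENNReal.ofReal c := by
  have hmono : Monotone fun r : ℕ => Ioc (-(r : ℝ)) r := fun r r' hr =>
    Ioc_subset_Ioc (neg_le_neg (Nat.cast_le.2 hr)) (Nat.cast_le.2 hr)
  have hunion : ⋃ r : ℕ, Ioc (-(r : ℝ)) r = univ := by
    refine eq_univ_of_forall fun x => mem_iUnion.2 ?_
    obtain ⟨r, hr⟩ := exists_nat_gt |x|
    exact ⟨r, by linarith [neg_abs_le x], by linarith [le_abs_self x]⟩
  rw [← hunion, hmono.measure_iUnion]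
  refine iSup_le fun r => ?_
  rw [f.measure_Ioc]
  exact ENNReal.ofReal_le_ofReal (hf _ _ (by linarith [(r.cast_nonneg : (0 : ℝ) ≤ r)]))

end General

section BoundedVariation

theorem exists_stieltjes_sub_ae_eq {h : ℝ → ℝ} (hvar : eVariationOn h univ ≤ 1)
    (h0 : Tendsto h (𝓝[>] 0) (𝓝 0)) :
    ∃ P Q : StieltjesFunction ℝ, (P + Q).measure univ ≤ 1 ∧
      h =ᵐ[volume] fun s => (P s - P 0) - (Q s - Q 0) := by
  have hbv : BoundedVariationOn h univ := ne_top_of_le_ne_top ENNReal.one_ne_top hvar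
  obtain ⟨p, q, hp, hq, rfl, hpq⟩ :=
    hbv.locallyBoundedVariationOn.exists_monotoneOn_sub_monotoneOn'
  rw [monotoneOn_univ] at hp hq
  refine ⟨hp.stieltjesFunction, hq.stieltjesFunction, ?_, ?_⟩
  · rw [← ENNReal.ofReal_one]
    refine StieltjesFunction.measure_univ_le_ofReal _ fun a b _ => ?_
    have hvar' : |variationOnFromTo (p - q) univ a (b + 1)| ≤ 1 :=
      (variationOnFromTo.abs_le_eVariationOn hbv).trans
        (ENNReal.toReal_le_of_le_ofReal zero_le_one (by simpa using hvar))
    simp only [StieltjesFunction.add_apply, Monotone.stieltjesFunction_eq]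
    linarith [hp.rightLim_le (lt_add_one b), hq.rightLim_le (lt_add_one b),
      hp.le_rightLim (le_refl a), hq.le_rightLim (le_refl a), hpq a trivial (b + 1) trivial,
      (abs_le.1 hvar').2]
  · have hPQ : Function.rightLim p 0 - Function.rightLim q 0 = 0 :=
      tendsto_nhds_unique ((hp.tendsto_rightLim 0).sub (hq.tendsto_rightLim 0)) h0
    filter_upwards [hp.ae_rightLim_eq, hq.ae_rightLim_eq] with s hps hqs
    simp only [Monotone.stieltjesFunction_eq, hps, hqs, Pi.sub_apply]
    linarith

/-- The Fubini kernel: `∫ orientedIoc s t dP(t) = P s - P 0`, while `∫ W(s) orientedIoc s t ds`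
is a tail integral of `W`. -/
noncomputable def orientedIoc (s t : ℝ) : ℝ := (Ioc 0 s).indicator 1 t - (Ioc s 0).indicator 1 t

theorem measurable_orientedIoc : Measurable (Function.uncurry orientedIoc) := by
  have hA : MeasurableSet {p : ℝ × ℝ | p.2 ∈ Ioc 0 p.1} :=
    (measurableSet_lt measurable_const measurable_snd).inter
      (measurableSet_le measurable_snd measurable_fst)
  have hB : MeasurableSet {p : ℝ × ℝ | p.2 ∈ Ioc p.1 0} :=
    (measurableSet_lt measurable_fst measurable_snd).inter
      (measurableSet_le measurable_snd measurable_const)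
  exact (measurable_const.indicator hA).sub (measurable_const.indicator hB)

theorem abs_orientedIoc_le (s t : ℝ) : |orientedIoc s t| ≤ 1 := by
  unfold orientedIoc
  by_cases h1 : t ∈ Ioc 0 s <;> by_cases h2 : t ∈ Ioc s 0 <;> simp [h1, h2]

theorem integral_orientedIoc (P : StieltjesFunction ℝ) [IsFiniteMeasure P.measure] (s : ℝ) :
    ∫ t, orientedIoc s t ∂P.measure = P s - P 0 := by
  simp only [orientedIoc]
  rw [integral_sub ((integrable_const 1).indicator measurableSet_Ioc)
    ((integrable_const 1).indicator measurableSet_Ioc), integral_indicator_one measurableSet_Ioc,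
    integral_indicator_one measurableSet_Ioc, measureReal_def, measureReal_def,
    P.measure_Ioc, P.measure_Ioc]
  rcases le_total 0 s with hs | hs <;>
    rw [ENNReal.toReal_ofReal (sub_nonneg.2 (P.mono hs)),
      ENNReal.ofReal_of_nonpos (sub_nonpos.2 (P.mono hs))] <;> simp

theorem abs_integral_mul_orientedIoc_le {W : ℝ → ℝ} {M : ℝ}
    (hR : ∀ t, 0 ≤ t → |∫ s in Ioi t, W s| ≤ M) (hL : ∀ t ≤ 0, |∫ s in Iio t, W s| ≤ M)
    (t : ℝ) : |∫ s, W s * orientedIoc s t| ≤ M := by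
  by_cases ht : 0 < t
  · have hW : (fun s => W s * orientedIoc s t) = (Ici t).indicator W := by
      ext s
      simp only [orientedIoc, indicator_apply, mem_Ioc, mem_Ici, Pi.one_apply]
      split_ifs <;> grind
    rw [hW, integral_indicator measurableSet_Ici, integral_Ici_eq_integral_Ioi]
    exact hR t ht.le
  · have hW : (fun s => W s * orientedIoc s t) = fun s => -(Iio t).indicator W s := by
      ext s
      simp only [orientedIoc, indicator_apply, mem_Ioc, mem_Iio, Pi.one_apply]
      split_ifs <;> grind
    rw [hW, integral_neg, integral_indicator measurableSet_Iio, abs_neg]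
    exact hL t (not_lt.1 ht)

section Fubini

variable {W : ℝ → ℝ} (hW : Integrable W) (P : StieltjesFunction ℝ) [IsFiniteMeasure P.measure]
include hW

theorem integrable_prod_mul_orientedIoc :
    Integrable (Function.uncurry fun s t => W s * orientedIoc s t) (volume.prod P.measure) := by
  refine (hW.comp_fst P.measure).norm.mono'
    (hW.1.comp_fst.mul measurable_orientedIoc.aestronglyMeasurable) (ae_of_all _ fun p => ?_)
  simpa [Function.uncurry, abs_mul] using
    mul_le_of_le_one_right (abs_nonneg (W p.1)) (abs_orientedIoc_le p.1 p.2)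

theorem integrable_mul_sub_stieltjes : Integrable (fun s => W s * (P s - P 0)) := by
  simpa only [Function.uncurry_apply_pair, integral_const_mul, integral_orientedIoc] using
    (integrable_prod_mul_orientedIoc hW P).integral_prod_left

theorem integral_mul_sub_stieltjes :
    ∫ s, W s * (P s - P 0) = ∫ t, (∫ s, W s * orientedIoc s t) ∂P.measure := by
  simp_rw [← integral_orientedIoc P, ← integral_const_mul]
  exact integral_integral_swap (integrable_prod_mul_orientedIoc hW P)

end Fubini

theorem abs_integral_mul_le_of_tendsto_nhdsGT {W h : ℝ → ℝ} {M : ℝ} (hW : Integrable W)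
    (hvar : eVariationOn h univ ≤ 1) (h0 : Tendsto h (𝓝[>] 0) (𝓝 0))
    (hR : ∀ t, 0 ≤ t → |∫ s in Ioi t, W s| ≤ M) (hL : ∀ t ≤ 0, |∫ s in Iio t, W s| ≤ M) :
    |∫ s, W s * h s| ≤ M := by
  obtain ⟨P, Q, hmass, hae⟩ := exists_stieltjes_sub_ae_eq hvar h0
  rw [StieltjesFunction.measure_add, Measure.add_apply] at hmass
  have : IsFiniteMeasure P.measure := ⟨(le_self_add.trans hmass).trans_lt ENNReal.one_lt_top⟩
  have : IsFiniteMeasure Q.measure := ⟨(le_add_self.trans hmass).trans_lt ENNReal.one_lt_top⟩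
  have hmass' : P.measure.real univ + Q.measure.real univ ≤ 1 := by
    rw [measureReal_def, measureReal_def,
      ← ENNReal.toReal_add (measure_ne_top _ _) (measure_ne_top _ _)]
    exact ENNReal.toReal_le_of_le_ofReal zero_le_one (by simpa using hmass)
  have hbound (μ : Measure ℝ) [IsFiniteMeasure μ] :
      |∫ t, (∫ s, W s * orientedIoc s t) ∂μ| ≤ M * μ.real univ := by
    simpa only [Real.norm_eq_abs] using norm_integral_le_of_norm_le_const (μ := μ)
      (ae_of_all _ fun t =>
        (Real.norm_eq_abs _).trans_le (abs_integral_mul_orientedIoc_le hR hL t))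
  have hM : 0 ≤ M := (abs_nonneg _).trans (hR 0 le_rfl)
  have hdecomp : ∫ s, W s * h s = ∫ t, (∫ s, W s * orientedIoc s t) ∂P.measure
      - ∫ t, (∫ s, W s * orientedIoc s t) ∂Q.measure := by
    have hae' : (fun s => W s * h s)
        =ᵐ[volume] fun s => W s * (P s - P 0) - W s * (Q s - Q 0) :=
      hae.mono fun s hs => by simp only [hs]; ring
    rw [integral_congr_ae hae',
      integral_sub (integrable_mul_sub_stieltjes hW P) (integrable_mul_sub_stieltjes hW Q),
      integral_mul_sub_stieltjes hW P, integral_mul_sub_stieltjes hW Q]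
  calc |∫ s, W s * h s| ≤ M * P.measure.real univ + M * Q.measure.real univ := by
        rw [hdecomp]; exact (abs_sub _ _).trans (add_le_add (hbound _) (hbound _))
    _ ≤ M := by nlinarith

theorem abs_integral_mul_le {W h : ℝ → ℝ} {M : ℝ} (hW : Integrable W)
    (hvar : eVariationOn h univ ≤ 1)
    (h0 : Tendsto h (𝓝[>] 0) (𝓝 0) ∨ Tendsto h (𝓝[<] 0) (𝓝 0))
    (hR : ∀ t, 0 ≤ t → |∫ s in Ioi t, W s| ≤ M) (hL : ∀ t ≤ 0, |∫ s in Iio t, W s| ≤ M) :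
    |∫ s, W s * h s| ≤ M := by
  rcases h0 with h0 | h0
  · exact abs_integral_mul_le_of_tendsto_nhdsGT hW hvar h0 hR hL
  have hvar' : eVariationOn (fun s => h (-s)) univ ≤ 1 := by
    rwa [← image_univ_of_surjective neg_surjective,
      ← eVariationOn.comp_eq_of_antitoneOn h Neg.neg fun a _ b _ hab => neg_le_neg hab] at hvar
  have h0' : Tendsto (fun s => h (-s)) (𝓝[>] 0) (𝓝 0) :=
    h0.comp (by simpa using tendsto_neg_nhdsGT (a := (0 : ℝ)))
  have hR' (t : ℝ) (ht : 0 ≤ t) : |∫ s in Ioi t, W (-s)| ≤ M := by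
    rw [integral_comp_neg_Ioi, integral_Iic_eq_integral_Iio]
    exact hL (-t) (neg_nonpos.2 ht)
  have hL' (t : ℝ) (ht : t ≤ 0) : |∫ s in Iio t, W (-s)| ≤ M := by
    rw [← integral_Iic_eq_integral_Iio, integral_comp_neg_Iic]
    exact hR (-t) (neg_nonneg.2 ht)
  simpa only [integral_neg_eq_self fun s => W s * h s] using
    abs_integral_mul_le_of_tendsto_nhdsGT hW.comp_neg hvar' h0' hR' hL'

end BoundedVariation

section TaylorWeight

noncomputable def taylorKernel (j : ℕ) (z s : ℝ) : ℝ := (z - s) ^ j / j !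

noncomputable def taylorWeight (j : ℕ) (z : ℝ) : ℝ → ℝ :=
  (Ioc 0 z).indicator (taylorKernel j z) - (Ioc z 0).indicator (taylorKernel j z)

theorem integral_taylorKernel (j : ℕ) (z a b : ℝ) :
    ∫ s in a..b, taylorKernel j z s = ((z - a) ^ (j + 1) - (z - b) ^ (j + 1)) / (j + 1)! := by
  simp only [taylorKernel]
  rw [intervalIntegral.integral_div,
    intervalIntegral.integral_comp_sub_left (fun u => u ^ j), integral_pow, Nat.factorial_succ]
  push_cast
  field_simp

theorem taylorWeight_mul (j : ℕ) (z : ℝ) (h : ℝ → ℝ) (s : ℝ) :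
    taylorWeight j z s * h s = (Ioc 0 z).indicator (fun u => taylorKernel j z u * h u) s
      - (Ioc z 0).indicator (fun u => taylorKernel j z u * h u) s := by
  rw [taylorWeight, Pi.sub_apply, sub_mul, indicator_mul_left, indicator_mul_left]

variable {h : ℝ → ℝ} (hh : LocallyIntegrable h) (j : ℕ) (z : ℝ)
include hh

theorem intervalIntegrable_taylorKernel_mul :
    IntervalIntegrable (fun s => taylorKernel j z s * h s) volume 0 z :=
  (hh.integrableOn_isCompact isCompact_uIcc).intervalIntegrable.continuousOn_mul
    (by unfold taylorKernel; fun_prop)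

theorem integrable_taylorWeight_mul : Integrable (fun s => taylorWeight j z s * h s) := by
  have hF := intervalIntegrable_taylorKernel_mul hh j z
  simp only [taylorWeight_mul]
  exact (hF.1.integrable_indicator measurableSet_Ioc).sub
    (hF.2.integrable_indicator measurableSet_Ioc)

theorem intervalIntegral_taylorKernel_mul :
    ∫ s in 0..z, taylorKernel j z s * h s = ∫ s, taylorWeight j z s * h s := by
  simp only [taylorWeight_mul]
  exact intervalIntegral_eq_integral_indicator_sub (intervalIntegrable_taylorKernel_mul hh j z)

omit hh

theorem integrable_taylorWeight : Integrable (taylorWeight j z) := by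
  simpa using integrable_taylorWeight_mul (locallyIntegrable_const (1 : ℝ)) j z

theorem setIntegral_Ioi_taylorWeight {t : ℝ} (ht : 0 ≤ t) :
    ∫ s in Ioi t, taylorWeight j z s = (1 / (j + 1)! : ℝ) * max (z - t) 0 ^ (j + 1) := by
  have hw : (Ioi t).indicator (taylorWeight j z) = (Ioc t z).indicator (taylorKernel j z) := by
    ext s
    simp only [taylorWeight, indicator_apply, Pi.sub_apply, mem_Ioi, mem_Ioc]
    split_ifs <;> grind
  rw [← integral_indicator measurableSet_Ioi, hw, integral_indicator measurableSet_Ioc]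
  rcases le_total t z with htz | hzt
  · rw [← intervalIntegral.integral_of_le htz, integral_taylorKernel, max_eq_left (by linarith)]
    simp [div_eq_inv_mul]
  · simp [Ioc_eq_empty_of_le hzt, max_eq_right (sub_nonpos.2 hzt)]

theorem setIntegral_Iio_taylorWeight {t : ℝ} (ht : t ≤ 0) :
    ∫ s in Iio t, taylorWeight j z s
      = ((-1) ^ (j + 1) / (j + 1)! : ℝ) * max (t - z) 0 ^ (j + 1) := by
  have hw : (Iio t).indicator (taylorWeight j z)
      = fun s => -(Ioo z t).indicator (taylorKernel j z) s := by
    ext s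
    simp only [taylorWeight, indicator_apply, Pi.sub_apply, mem_Iio, mem_Ioc, mem_Ioo]
    split_ifs <;> grind
  rw [← integral_indicator measurableSet_Iio, hw, integral_neg,
    integral_indicator measurableSet_Ioo, ← integral_Ioc_eq_integral_Ioo]
  rcases le_total z t with hzt | htz
  · rw [← intervalIntegral.integral_of_le hzt, integral_taylorKernel, max_eq_left (by linarith),
      show z - t = -(t - z) by ring, neg_pow]
    ring
  · simp [Ioc_eq_empty_of_le htz, max_eq_right (sub_nonpos.2 htz)]

end TaylorWeight

section MeanGap

variable {m n : ℕ} (x : Fin m → ℝ) (y : Fin n → ℝ)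

noncomputable def meanGap (g : ℝ → ℝ) : ℝ :=
  (1 / m : ℝ) * ∑ i, g (x i) - (1 / n : ℝ) * ∑ j, g (y j)

theorem meanGap_const_mul (c : ℝ) (g : ℝ → ℝ) :
    meanGap x y (fun z => c * g z) = c * meanGap x y g := by
  rw [meanGap, meanGap, ← Finset.mul_sum, ← Finset.mul_sum]
  ring

theorem meanGap_mul_const (g : ℝ → ℝ) (c : ℝ) :
    meanGap x y g * c = meanGap x y (fun z => g z * c) := by
  rw [meanGap, meanGap, ← Finset.sum_mul, ← Finset.sum_mul]
  ring

variable {X : Type*} [MeasurableSpace X] {μ : Measure X} {g : ℝ → X → ℝ}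

theorem integrable_meanGap (hg : ∀ z, Integrable (g z) μ) :
    Integrable (fun s => meanGap x y (fun z => g z s)) μ :=
  ((integrable_finsetSum _ fun i _ => hg (x i)).const_mul _).sub
    ((integrable_finsetSum _ fun j _ => hg (y j)).const_mul _)

theorem integral_meanGap (hg : ∀ z, Integrable (g z) μ) :
    ∫ s, meanGap x y (fun z => g z s) ∂μ = meanGap x y (fun z => ∫ s, g z s ∂μ) := by
  simp only [meanGap]
  rw [integral_sub ((integrable_finsetSum _ fun i _ => hg (x i)).const_mul _)
    ((integrable_finsetSum _ fun j _ => hg (y j)).const_mul _), integral_const_mul,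
    integral_const_mul, integral_finsetSum _ fun i _ => hg (x i),
    integral_finsetSum _ fun j _ => hg (y j)]

noncomputable def gapWeight (j : ℕ) (s : ℝ) : ℝ := meanGap x y (fun z => taylorWeight j z s)

variable (j : ℕ)

theorem integrable_gapWeight : Integrable (gapWeight x y j) :=
  integrable_meanGap x y (integrable_taylorWeight j)

theorem meanGap_eq_integral_gapWeight_mul {f h : ℝ → ℝ} (hh : LocallyIntegrable h)
    (hf : ∀ z, f z = ∫ s in 0..z, taylorKernel j z s * h s) :
    meanGap x y f = ∫ s, gapWeight x y j s * h s := by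
  have hf' : f = fun z => ∫ s, taylorWeight j z s * h s :=
    funext fun z => (hf z).trans (intervalIntegral_taylorKernel_mul hh j z)
  simp only [gapWeight, meanGap_mul_const]
  rw [integral_meanGap x y (integrable_taylorWeight_mul hh j), hf']

theorem abs_setIntegral_Ioi_gapWeight {t : ℝ} (ht : 0 ≤ t) :
    |∫ s in Ioi t, gapWeight x y j s|
      = (1 / (j + 1)! : ℝ) * |meanGap x y fun z => max (z - t) 0 ^ (j + 1)| := by
  simp only [gapWeight]
  rw [integral_meanGap x y fun z => (integrable_taylorWeight j z).integrableOn]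
  simp only [setIntegral_Ioi_taylorWeight j _ ht, meanGap_const_mul]
  rw [abs_mul, abs_of_pos (by positivity)]

theorem abs_setIntegral_Iio_gapWeight {t : ℝ} (ht : t ≤ 0) :
    |∫ s in Iio t, gapWeight x y j s|
      = (1 / (j + 1)! : ℝ) * |meanGap x y fun z => max (t - z) 0 ^ (j + 1)| := by
  simp only [gapWeight]
  rw [integral_meanGap x y fun z => (integrable_taylorWeight j z).integrableOn]
  simp only [setIntegral_Iio_taylorWeight j _ ht, meanGap_const_mul]
  rw [abs_mul, abs_div, abs_pow, abs_neg, abs_one, one_pow, Nat.abs_cast]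

theorem bddAbove_abs_meanGap_Ici : BddAbove (range fun t : Ici (0 : ℝ) =>
    (1 / (j + 1)! : ℝ) * |meanGap x y fun z => max (z - t) 0 ^ (j + 1)|) :=
  ⟨_, forall_mem_range.2 fun t => (abs_setIntegral_Ioi_gapWeight x y j t.2).symm.trans_le
    (abs_setIntegral_le_integral_abs (integrable_gapWeight x y j) _)⟩

theorem bddAbove_abs_meanGap_Iic : BddAbove (range fun t : Iic (0 : ℝ) =>
    (1 / (j + 1)! : ℝ) * |meanGap x y fun z => max (t - z) 0 ^ (j + 1)|) :=
  ⟨_, forall_mem_range.2 fun t => (abs_setIntegral_Iio_gapWeight x y j t.2).symm.trans_le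
    (abs_setIntegral_le_integral_abs (integrable_gapWeight x y j) _)⟩

theorem abs_meanGap_le_of_mem_Fk {f : ℝ → ℝ} (hf : f ∈ Fk (j + 1)) {M : ℝ}
    (hR : ∀ t, 0 ≤ t → (1 / (j + 1)! : ℝ) * |meanGap x y fun z => max (z - t) 0 ^ (j + 1)| ≤ M)
    (hL : ∀ t ≤ 0, (1 / (j + 1)! : ℝ) * |meanGap x y fun z => max (t - z) 0 ^ (j + 1)| ≤ M) :
    |meanGap x y f| ≤ M := by
  obtain ⟨h, hvar, h0, hf⟩ := hf
  rw [meanGap_eq_integral_gapWeight_mul x y j (BoundedVariationOn.locallyIntegrable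
    (ne_top_of_le_ne_top ENNReal.one_ne_top hvar)) (by simpa [taylorKernel] using hf)]
  exact abs_integral_mul_le (integrable_gapWeight x y j) hvar h0
    (fun t ht => (abs_setIntegral_Ioi_gapWeight x y j ht).trans_le (hR t ht))
    (fun t ht => (abs_setIntegral_Iio_gapWeight x y j ht).trans_le (hL t ht))

theorem exists_mem_Fk_meanGap_eq {h : ℝ → ℝ} (hvar : eVariationOn h univ ≤ 1)
    (h0 : Tendsto h (𝓝[>] 0) (𝓝 0) ∨ Tendsto h (𝓝[<] 0) (𝓝 0)) :
    ∃ f ∈ Fk (j + 1), meanGap x y f = ∫ s, gapWeight x y j s * h s := by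
  have hh : LocallyIntegrable h :=
    BoundedVariationOn.locallyIntegrable (ne_top_of_le_ne_top ENNReal.one_ne_top hvar)
  refine ⟨fun z => ∫ s in 0..z, taylorKernel j z s * h s,
    ⟨h, hvar, h0, fun z => by simp [taylorKernel]⟩,
    meanGap_eq_integral_gapWeight_mul x y j hh fun _ => rfl⟩

theorem exists_mem_Fk_abs_meanGap_eq_of_nonneg {t : ℝ} (ht : 0 ≤ t) :
    ∃ f ∈ Fk (j + 1),
      |meanGap x y f| = (1 / (j + 1)! : ℝ) * |meanGap x y fun z => max (z - t) 0 ^ (j + 1)| := by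
  set h : ℝ → ℝ := (Ioi t).indicator 1
  have hmono : Monotone h := fun a b hab => by
    simp only [h, indicator_apply, mem_Ioi, Pi.one_apply]
    split_ifs <;> grind
  have hvar : eVariationOn h univ ≤ 1 := by
    simpa using hmono.eVariationOn_univ_le (a := 0) (b := 1)
      (fun s => indicator_nonneg (fun _ _ => zero_le_one) s)
      (fun s => indicator_le_self' (fun _ _ => zero_le_one) s)
  have h0 : Tendsto h (𝓝[<] 0) (𝓝 0) := tendsto_const_nhds.congr' <|
    eventually_nhdsWithin_of_forall fun s (hs : s < 0) => by
      simp [h, indicator_of_notMem (show s ∉ Ioi t from not_lt.2 (hs.le.trans ht))]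
  obtain ⟨f, hf, hfW⟩ := exists_mem_Fk_meanGap_eq x y j hvar (Or.inr h0)
  refine ⟨f, hf, ?_⟩
  rw [hfW, ← abs_setIntegral_Ioi_gapWeight x y j ht, ← integral_indicator measurableSet_Ioi]
  simp_rw [h, ← indicator_mul_right, Pi.one_apply, mul_one]

theorem exists_mem_Fk_abs_meanGap_eq_of_nonpos {t : ℝ} (ht : t ≤ 0) :
    ∃ f ∈ Fk (j + 1),
      |meanGap x y f| = (1 / (j + 1)! : ℝ) * |meanGap x y fun z => max (t - z) 0 ^ (j + 1)| := by
  set h : ℝ → ℝ := fun s => -(Iio t).indicator 1 s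
  have hmono : Monotone h := fun a b hab => by
    simp only [h, indicator_apply, mem_Iio, Pi.one_apply]
    split_ifs <;> grind
  have hvar : eVariationOn h univ ≤ 1 := by
    simpa using hmono.eVariationOn_univ_le (a := -1) (b := 0)
      (fun s => neg_le_neg (indicator_le_self' (fun _ _ => zero_le_one) s))
      (fun s => neg_nonpos.2 (indicator_nonneg (fun _ _ => zero_le_one) s))
  have h0 : Tendsto h (𝓝[>] 0) (𝓝 0) := tendsto_const_nhds.congr' <|
    eventually_nhdsWithin_of_forall fun s (hs : 0 < s) => by
      simp [h, indicator_of_notMem (show s ∉ Iio t from not_lt.2 (ht.trans hs.le))]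
  obtain ⟨f, hf, hfW⟩ := exists_mem_Fk_meanGap_eq x y j hvar (Or.inl h0)
  refine ⟨f, hf, ?_⟩
  rw [hfW, ← abs_setIntegral_Iio_gapWeight x y j ht, ← integral_indicator measurableSet_Iio]
  simp_rw [h, mul_neg, ← indicator_mul_right, Pi.one_apply, mul_one, integral_neg, abs_neg]

end MeanGap

theorem stmt2_general (k m n : ℕ) (hk : 1 ≤ k)
    (x : Fin m → ℝ) (y : Fin n → ℝ) :
    (⨆ f ∈ Fk k, |(1 / m : ℝ) * ∑ i, f (x i) - (1 / n : ℝ) * ∑ j, f (y j)|)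
      = max
        (⨆ t : Set.Ici (0:ℝ), (1 / (Nat.factorial k : ℝ)) *
          |(1 / m : ℝ) * ∑ i, max (x i - (t:ℝ)) 0 ^ k
            - (1 / n : ℝ) * ∑ j, max (y j - (t:ℝ)) 0 ^ k|)
        (⨆ t : Set.Iic (0:ℝ), (1 / (Nat.factorial k : ℝ)) *
          |(1 / m : ℝ) * ∑ i, max ((t:ℝ) - x i) 0 ^ k
            - (1 / n : ℝ) * ∑ j, max ((t:ℝ) - y j) 0 ^ k|) := by
  obtain ⟨j, rfl⟩ : ∃ j, k = j + 1 := ⟨k - 1, by omega⟩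
  refine biSup_eq_max_ciSup (F := fun f => |meanGap x y f|)
    (A := fun t : Ici (0 : ℝ) =>
      (1 / (j + 1)! : ℝ) * |meanGap x y fun z => max (z - t) 0 ^ (j + 1)|)
    (B := fun t : Iic (0 : ℝ) =>
      (1 / (j + 1)! : ℝ) * |meanGap x y fun z => max (t - z) 0 ^ (j + 1)|)
    (fun f => abs_nonneg _) (fun f hf => abs_meanGap_le_of_mem_Fk x y j hf
      (fun t ht => le_max_of_le_left (le_ciSup (bddAbove_abs_meanGap_Ici x y j) ⟨t, ht⟩))
      (fun t ht => le_max_of_le_right (le_ciSup (bddAbove_abs_meanGap_Iic x y j) ⟨t, ht⟩)))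
    (fun t => ?_) (fun t => ?_)
  · obtain ⟨f, hf, hfA⟩ := exists_mem_Fk_abs_meanGap_eq_of_nonneg x y j t.2
    exact ⟨f, hf, hfA.ge⟩
  · obtain ⟨f, hf, hfB⟩ := exists_mem_Fk_abs_meanGap_eq_of_nonpos x y j t.2
    exact ⟨f, hf, hfB.ge⟩

theorem stmt2 (k m n : ℕ) (hk : 1 ≤ k) (hm : 1 ≤ m) (hn : 1 ≤ n)
    (x : Fin m → ℝ) (y : Fin n → ℝ) :
    (⨆ f ∈ Fk k, |(1 / m : ℝ) * ∑ i, f (x i) - (1 / n : ℝ) * ∑ j, f (y j)|)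
      = max
        (⨆ t : Set.Ici (0:ℝ), (1 / (Nat.factorial k : ℝ)) *
          |(1 / m : ℝ) * ∑ i, max (x i - (t:ℝ)) 0 ^ k
            - (1 / n : ℝ) * ∑ j, max (y j - (t:ℝ)) 0 ^ k|)
        (⨆ t : Set.Iic (0:ℝ), (1 / (Nat.factorial k : ℝ)) *
          |(1 / m : ℝ) * ∑ i, max ((t:ℝ) - x i) 0 ^ k
            - (1 / n : ℝ) * ∑ j, max ((t:ℝ) - y j) 0 ^ k|) :=
  stmt2_general k m n hk x y
end

section
/- Let k ≥ 2 be an integer and let x_1,…,x_m and y_1,…,y_n be real numbers (m, n ≥ 1). Define φ(t) = (1/k!)((1/m)∑_{i=1}^m (x_i−t)_+^k − (1/n)∑_{j=1}^n (y_j−t)_+^k) and ψ(t) = (1/k!)((1/m)∑_{i=1}^m (t−x_i)_+^k − (1/n)∑_{j=1}^n (t−y_j)_+^k). Let T = max{ sup_{t ≥ 0} |φ(t)| , sup_{t ≤ 0} |ψ(t)| } and let T* = max{ max{ |φ(t)| : t ∈ Z⁰, t ≥ 0 } , max{ |ψ(t)| : t ∈ Z⁰, t ≤ 0 } }, where Z⁰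 = {0} ∪ {x_1,…,x_m} ∪ {y_1,…,y_n}. Let δ_N be the maximum gap between consecutive points of Z⁰ when sorted in increasing order. Then 0 ≤ T − T* ≤ (δ_N/(k−1)!) ((1/m)∑_{i=1}^m |x_i|^{k−1} + (1/n)∑_{j=1}^n |y_j|^{k−1}). -/
open MeasureTheory Filter Set


lemma pow_sub_pow_aux (k : ℕ) {a b c : ℝ} (hb : 0 ≤ b) (hba : b ≤ a) (hac : a ≤ c) :
    a ^ k - b ^ k ≤ k * c ^ (k - 1) * (a - b) := by
  rcases Nat.eq_zero_or_pos k with rfl | hk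
  · simp
  have ha : 0 ≤ a := hb.trans hba
  have hc : 0 ≤ c := ha.trans hac
  have hbc : b ≤ c := hba.trans hac
  rw [← geom_sum₂_mul a b k]
  have hsum : (∑ i ∈ Finset.range k, a ^ i * b ^ (k - 1 - i)) ≤ k * c ^ (k - 1) := by
    calc (∑ i ∈ Finset.range k, a ^ i * b ^ (k - 1 - i))
        ≤ ∑ _i ∈ Finset.range k, c ^ (k - 1) := by
          apply Finset.sum_le_sum
          intro i hi
          have hik : i ≤ k - 1 := by
            have := Finset.mem_range.mp hi; omega
          calc a ^ i * b ^ (k - 1 - i) ≤ c ^ i * c ^ (k - 1 - i) := by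
                apply mul_le_mul (pow_le_pow_left₀ ha hac i) (pow_le_pow_left₀ hb hbc _)
                  (by positivity) (by positivity)
            _ = c ^ (k - 1) := by rw [← pow_add]; congr 1; omega
      _ = k * c ^ (k - 1) := by simp [mul_comm]
  exact mul_le_mul_of_nonneg_right hsum (by linarith)

lemma clip_diff (k : ℕ) {s t x : ℝ} (hs : 0 ≤ s) (hst : s ≤ t) :
    0 ≤ max (x - s) 0 ^ k - max (x - t) 0 ^ k ∧
    max (x - s) 0 ^ k - max (x - t) 0 ^ k ≤ k * |x| ^ (k - 1) * (t - s) := by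
  have h0t : (0:ℝ) ≤ max (x - t) 0 := le_max_right _ _
  have hmono : max (x - t) 0 ≤ max (x - s) 0 := max_le_max (by linarith) le_rfl
  have hax : max (x - s) 0 ≤ |x| := max_le (by linarith [le_abs_self x]) (abs_nonneg x)
  constructor
  · have := pow_le_pow_left₀ h0t hmono k; linarith
  · have h1 := pow_sub_pow_aux k h0t hmono hax
    have h2 : max (x - s) 0 - max (x - t) 0 ≤ t - s := by
      have h3 : max (x - s) 0 ≤ max (x - t) 0 + (t - s) := by
        apply max_le (by linarith [le_max_left (x - t) (0:ℝ)]) (by linarith)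
      linarith
    calc max (x - s) 0 ^ k - max (x - t) 0 ^ k
        ≤ ↑k * |x| ^ (k-1) * (max (x-s) 0 - max (x-t) 0) := h1
      _ ≤ ↑k * |x| ^ (k-1) * (t - s) := by
          apply mul_le_mul_of_nonneg_left h2 (by positivity)

lemma lip_phi (k m n : ℕ) (hk : 1 ≤ k) (x : Fin m → ℝ) (y : Fin n → ℝ)
    {s t : ℝ} (hs : 0 ≤ s) (hst : s ≤ t) :
    |(1 / (Nat.factorial k : ℝ)) *
        ((1 / m : ℝ) * ∑ i, max (x i - t) 0 ^ k - (1 / n : ℝ) * ∑ j, max (y j - t) 0 ^ k)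
      - (1 / (Nat.factorial k : ℝ)) *
        ((1 / m : ℝ) * ∑ i, max (x i - s) 0 ^ k - (1 / n : ℝ) * ∑ j, max (y j - s) 0 ^ k)|
    ≤ (t - s) * ((1 / (Nat.factorial (k-1) : ℝ)) *
        ((1 / m : ℝ) * ∑ i, |x i| ^ (k-1) + (1 / n : ℝ) * ∑ j, |y j| ^ (k-1))) := by
  set A : ℝ := ∑ i, (max (x i - s) 0 ^ k - max (x i - t) 0 ^ k) with hA
  set B : ℝ := ∑ j, (max (y j - s) 0 ^ k - max (y j - t) 0 ^ k) with hB
  have hA0 : 0 ≤ A := Finset.sum_nonneg fun i _ => (clip_diff k hs hst).1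
  have hB0 : 0 ≤ B := Finset.sum_nonneg fun j _ => (clip_diff k hs hst).1
  have hAle : A ≤ k * (∑ i, |x i| ^ (k-1)) * (t - s) := by
    calc A ≤ ∑ i, ↑k * |x i| ^ (k-1) * (t - s) :=
          Finset.sum_le_sum fun i _ => (clip_diff k hs hst).2
      _ = ↑k * (∑ i, |x i| ^ (k-1)) * (t - s) := by
          rw [Finset.mul_sum, Finset.sum_mul]
  have hBle : B ≤ k * (∑ j, |y j| ^ (k-1)) * (t - s) := by
    calc B ≤ ∑ j, ↑k * |y j| ^ (k-1) * (t - s) :=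
          Finset.sum_le_sum fun j _ => (clip_diff k hs hst).2
      _ = ↑k * (∑ j, |y j| ^ (k-1)) * (t - s) := by
          rw [Finset.mul_sum, Finset.sum_mul]
  have hdiff : (1 / (Nat.factorial k : ℝ)) *
        ((1 / m : ℝ) * ∑ i, max (x i - t) 0 ^ k - (1 / n : ℝ) * ∑ j, max (y j - t) 0 ^ k)
      - (1 / (Nat.factorial k : ℝ)) *
        ((1 / m : ℝ) * ∑ i, max (x i - s) 0 ^ k - (1 / n : ℝ) * ∑ j, max (y j - s) 0 ^ k)
      = (1 / (Nat.factorial k : ℝ)) * ((1 / n : ℝ) * B - (1 / m : ℝ) * A) := by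
    rw [hA, hB, Finset.sum_sub_distrib, Finset.sum_sub_distrib]; ring
  rw [hdiff]
  have hfac : (Nat.factorial k : ℝ) = k * Nat.factorial (k - 1) := by
    obtain ⟨j, rfl⟩ : ∃ j, k = j + 1 := ⟨k - 1, by omega⟩
    simp [Nat.factorial_succ]
  have hfacpos : (0:ℝ) < Nat.factorial k := by positivity
  have hm0 : (0:ℝ) ≤ (1 / m : ℝ) := by positivity
  have hn0 : (0:ℝ) ≤ (1 / n : ℝ) := by positivity
  rw [abs_mul, abs_of_pos (by positivity : (0:ℝ) < 1 / (Nat.factorial k : ℝ))]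
  have habs : |(1 / n : ℝ) * B - (1 / m : ℝ) * A| ≤ (1 / m : ℝ) * A + (1 / n : ℝ) * B := by
    rw [abs_le]
    constructor <;> nlinarith [mul_nonneg hm0 hA0, mul_nonneg hn0 hB0]
  calc (1 / (Nat.factorial k : ℝ)) * |(1 / n : ℝ) * B - (1 / m : ℝ) * A|
      ≤ (1 / (Nat.factorial k : ℝ)) * ((1 / m : ℝ) * A + (1 / n : ℝ) * B) := by
        apply mul_le_mul_of_nonneg_left habs (by positivity)
    _ ≤ (1 / (Nat.factorial k : ℝ)) *
          ((1 / m : ℝ) * (↑k * (∑ i, |x i| ^ (k-1)) * (t - s))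
            + (1 / n : ℝ) * (↑k * (∑ j, |y j| ^ (k-1)) * (t - s))) := by
        apply mul_le_mul_of_nonneg_left _ (by positivity)
        have := mul_le_mul_of_nonneg_left hAle hm0
        have := mul_le_mul_of_nonneg_left hBle hn0
        linarith
    _ = (t - s) * ((1 / (Nat.factorial (k-1) : ℝ)) *
          ((1 / m : ℝ) * ∑ i, |x i| ^ (k-1) + (1 / n : ℝ) * ∑ j, |y j| ^ (k-1))) := by
        rw [hfac]
        have hk0 : (k:ℝ) ≠ 0 := by positivity
        have hf0 : (Nat.factorial (k-1) : ℝ) ≠ 0 := by positivity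
        field_simp

theorem stmt4 (k m n : ℕ) (hk : 2 ≤ k) (hm : 1 ≤ m) (hn : 1 ≤ n)
    (x : Fin m → ℝ) (y : Fin n → ℝ)
    (φ ψ : ℝ → ℝ)
    (hφ : φ = fun t : ℝ => (1 / (Nat.factorial k : ℝ)) *
      ((1 / m : ℝ) * ∑ i, max (x i - t) 0 ^ k - (1 / n : ℝ) * ∑ j, max (y j - t) 0 ^ k))
    (hψ : ψ = fun t : ℝ => (1 / (Nat.factorial k : ℝ)) *
      ((1 / m : ℝ) * ∑ i, max (t - x i) 0 ^ k - (1 / n : ℝ) * ∑ j, max (t - y j) 0 ^ k))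
    (Z0 : Finset ℝ)
    (hZ0 : Z0 = insert 0 (Finset.image x Finset.univ ∪ Finset.image y Finset.univ))
    (T Tstar δ : ℝ)
    (hT : T = max (⨆ t : Set.Ici (0:ℝ), |φ t|) (⨆ t : Set.Iic (0:ℝ), |ψ t|))
    (hTstar : Tstar = max (⨆ t : {t : ℝ // t ∈ Z0 ∧ 0 ≤ t}, |φ t|)
                          (⨆ t : {t : ℝ // t ∈ Z0 ∧ t ≤ 0}, |ψ t|))
    -- `δ` is the maximum gap between consecutive points of `Z0` sorted in increasing
    -- order: every gap between consecutive points of `Z0` is at most `δ`.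
    (hδ : ∀ a ∈ Z0, ∀ b ∈ Z0, a < b → (∀ c ∈ Z0, c ≤ a ∨ b ≤ c) → b - a ≤ δ) :
    0 ≤ T - Tstar ∧
    T - Tstar ≤ (δ / (Nat.factorial (k - 1) : ℝ)) *
      ((1 / m : ℝ) * ∑ i, |x i| ^ (k - 1) + (1 / n : ℝ) * ∑ j, |y j| ^ (k - 1)) := by
  have hk1 : 1 ≤ k := by omega
  have hZ00 : (0:ℝ) ∈ Z0 := by rw [hZ0]; exact Finset.mem_insert_self _ _
  have hxZ : ∀ i, x i ∈ Z0 := fun i => by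
    rw [hZ0]
    simp only [Finset.mem_insert, Finset.mem_union, Finset.mem_image, Finset.mem_univ,
      true_and]
    exact Or.inr (Or.inl ⟨i, rfl⟩)
  have hyZ : ∀ j, y j ∈ Z0 := fun j => by
    rw [hZ0]
    simp only [Finset.mem_insert, Finset.mem_union, Finset.mem_image, Finset.mem_univ,
      true_and]
    exact Or.inr (Or.inr ⟨j, rfl⟩)
  set S : ℝ := (1 / m : ℝ) * ∑ i, |x i| ^ (k-1) + (1 / n : ℝ) * ∑ j, |y j| ^ (k-1) with hS
  set L : ℝ := (1 / (Nat.factorial (k-1) : ℝ)) * S with hL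
  have hL0 : 0 ≤ L := by
    rw [hL, hS]
    have h1 : (0:ℝ) ≤ ∑ i, |x i| ^ (k-1) := Finset.sum_nonneg fun i _ => by positivity
    have h2 : (0:ℝ) ≤ ∑ j, |y j| ^ (k-1) := Finset.sum_nonneg fun j _ => by positivity
    positivity
  have hLδ : 0 ≤ L * δ := by
    by_cases hall : ∀ z ∈ Z0, z = 0
    · have hS0 : S = 0 := by
        rw [hS]
        have hx0 : ∀ i : Fin m, |x i| ^ (k-1) = 0 := fun i => by
          rw [hall _ (hxZ i)]; simp [zero_pow (by omega : k - 1 ≠ 0)]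
        have hy0 : ∀ j : Fin n, |y j| ^ (k-1) = 0 := fun j => by
          rw [hall _ (hyZ j)]; simp [zero_pow (by omega : k - 1 ≠ 0)]
        rw [Finset.sum_eq_zero fun i _ => hx0 i, Finset.sum_eq_zero fun j _ => hy0 j]
        ring
      rw [hL, hS0]; simp
    · push_neg at hall
      obtain ⟨z, hzZ, hz0⟩ := hall
      have hZne : Z0.Nonempty := ⟨0, hZ00⟩
      set a := Z0.min' hZne with ha
      have haZ : a ∈ Z0 := Z0.min'_mem hZne
      have hBne : (Z0.filter (fun c => a < c)).Nonempty := by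
        rcases eq_or_lt_of_le (Z0.min'_le 0 hZ00) with h0 | h0
        · refine ⟨z, Finset.mem_filter.mpr ⟨hzZ, ?_⟩⟩
          refine lt_of_le_of_ne (Z0.min'_le z hzZ) fun h => hz0 ?_
          rw [← h, ← h0]
        · exact ⟨0, Finset.mem_filter.mpr ⟨hZ00, h0⟩⟩
      set b := (Z0.filter (fun c => a < c)).min' hBne with hb
      have hbmem := (Z0.filter (fun c => a < c)).min'_mem hBne
      have hbZ : b ∈ Z0 := (Finset.mem_filter.mp hbmem).1
      have hab : a < b := (Finset.mem_filter.mp hbmem).2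
      have hgap : b - a ≤ δ := by
        refine hδ a haZ b hbZ hab fun c hc => ?_
        by_cases h : a < c
        · exact Or.inr (Finset.min'_le _ c (Finset.mem_filter.mpr ⟨hc, h⟩))
        · exact Or.inl (le_of_not_gt h)
      have hδ0 : 0 ≤ δ := by linarith
      exact mul_nonneg hL0 hδ0
  haveI hfin1 : Finite {t : ℝ // t ∈ Z0 ∧ 0 ≤ t} :=
    Set.Finite.to_subtype (Z0.finite_toSet.subset fun t ht => ht.1)
  haveI hfin2 : Finite {t : ℝ // t ∈ Z0 ∧ t ≤ 0} :=
    Set.Finite.to_subtype (Z0.finite_toSet.subset fun t ht => ht.1)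
  haveI ne1 : Nonempty {t : ℝ // t ∈ Z0 ∧ 0 ≤ t} := ⟨⟨0, hZ00, le_refl 0⟩⟩
  haveI ne2 : Nonempty {t : ℝ // t ∈ Z0 ∧ t ≤ 0} := ⟨⟨0, hZ00, le_refl 0⟩⟩
  have bdd1 : BddAbove (Set.range fun t : {t : ℝ // t ∈ Z0 ∧ 0 ≤ t} => |φ ↑t|) :=
    Set.Finite.bddAbove (Set.finite_range _)
  have bdd2 : BddAbove (Set.range fun t : {t : ℝ // t ∈ Z0 ∧ t ≤ 0} => |ψ ↑t|) :=
    Set.Finite.bddAbove (Set.finite_range _)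
  have hφle : ∀ t ∈ Z0, 0 ≤ t → |φ t| ≤ Tstar := fun t ht h0 => by
    rw [hTstar]
    exact le_trans (le_ciSup bdd1 ⟨t, ht, h0⟩) (le_max_left _ _)
  have hψle : ∀ t ∈ Z0, t ≤ 0 → |ψ t| ≤ Tstar := fun t ht h0 => by
    rw [hTstar]
    exact le_trans (le_ciSup bdd2 ⟨t, ht, h0⟩) (le_max_right _ _)
  have hTstar0 : 0 ≤ Tstar := le_trans (abs_nonneg _) (hφle 0 hZ00 (le_refl 0))
  have keyφ : ∀ t : ℝ, 0 ≤ t → |φ t| ≤ Tstar + L * δ := by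
    intro t ht
    have h0A : (0:ℝ) ∈ Z0.filter (· ≤ t) := Finset.mem_filter.mpr ⟨hZ00, ht⟩
    have hAne : (Z0.filter (· ≤ t)).Nonempty := ⟨0, h0A⟩
    set a := (Z0.filter (· ≤ t)).max' hAne with haf
    have hamem := (Z0.filter (· ≤ t)).max'_mem hAne
    have haZ : a ∈ Z0 := (Finset.mem_filter.mp hamem).1
    have hat : a ≤ t := (Finset.mem_filter.mp hamem).2
    have ha0 : 0 ≤ a := Finset.le_max' _ 0 h0A
    have hφa : |φ a| ≤ Tstar := hφle a haZ ha0
    by_cases hB : (Z0.filter (fun z => t < z)).Nonempty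
    · set b := (Z0.filter (fun z => t < z)).min' hB with hbf
      have hbmem := (Z0.filter (fun z => t < z)).min'_mem hB
      have hbZ : b ∈ Z0 := (Finset.mem_filter.mp hbmem).1
      have htb : t < b := (Finset.mem_filter.mp hbmem).2
      have hgap : b - a ≤ δ := by
        refine hδ a haZ b hbZ (by linarith) fun c hc => ?_
        by_cases hct : c ≤ t
        · have hcm : c ∈ Z0.filter (· ≤ t) := Finset.mem_filter.mpr ⟨hc, hct⟩
          left; rw [haf]; exact Finset.le_max' _ c hcm
        · exact Or.inr (Finset.min'_le _ c (Finset.mem_filter.mpr ⟨hc, lt_of_not_ge hct⟩))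
      have hlip : |φ t - φ a| ≤ (t - a) * L := by
        rw [hφ, hL, hS]
        exact lip_phi k m n hk1 x y ha0 hat
      have h1 : |φ t| ≤ |φ a| + (t - a) * L := by
        have := abs_sub_abs_le_abs_sub (φ t) (φ a)
        linarith
      have h2 : (t - a) * L ≤ δ * L := mul_le_mul_of_nonneg_right (by linarith) hL0
      have h3 : δ * L = L * δ := mul_comm _ _
      linarith
    · have hφt : φ t = 0 := by
        rw [hφ]
        have hx : (∑ i, max (x i - t) 0 ^ k) = 0 := Finset.sum_eq_zero fun i _ => by
          have hle : ¬ t < x i := fun h => hB ⟨x i, Finset.mem_filter.mpr ⟨hxZ i, h⟩⟩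
          rw [max_eq_right (by push_neg at hle; linarith)]
          exact zero_pow (by omega)
        have hy : (∑ j, max (y j - t) 0 ^ k) = 0 := Finset.sum_eq_zero fun j _ => by
          have hle : ¬ t < y j := fun h => hB ⟨y j, Finset.mem_filter.mpr ⟨hyZ j, h⟩⟩
          rw [max_eq_right (by push_neg at hle; linarith)]
          exact zero_pow (by omega)
        simp only [hx, hy]
        ring
      rw [hφt]
      simpa using by linarith
  have keyψ : ∀ t : ℝ, t ≤ 0 → |ψ t| ≤ Tstar + L * δ := by
    intro t ht
    have h0A : (0:ℝ) ∈ Z0.filter (t ≤ ·) := Finset.mem_filter.mpr ⟨hZ00, ht⟩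
    have hAne : (Z0.filter (t ≤ ·)).Nonempty := ⟨0, h0A⟩
    set b := (Z0.filter (t ≤ ·)).min' hAne with hbf
    have hbmem := (Z0.filter (t ≤ ·)).min'_mem hAne
    have hbZ : b ∈ Z0 := (Finset.mem_filter.mp hbmem).1
    have htb : t ≤ b := (Finset.mem_filter.mp hbmem).2
    have hb0 : b ≤ 0 := Finset.min'_le _ 0 h0A
    have hψb : |ψ b| ≤ Tstar := hψle b hbZ hb0
    by_cases hB : (Z0.filter (fun z => z < t)).Nonempty
    · set a := (Z0.filter (fun z => z < t)).max' hB with haf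
      have hamem := (Z0.filter (fun z => z < t)).max'_mem hB
      have haZ : a ∈ Z0 := (Finset.mem_filter.mp hamem).1
      have hta : a < t := (Finset.mem_filter.mp hamem).2
      have hgap : b - a ≤ δ := by
        refine hδ a haZ b hbZ (by linarith) fun c hc => ?_
        by_cases hct : c < t
        · have hcm : c ∈ Z0.filter (fun z => z < t) := Finset.mem_filter.mpr ⟨hc, hct⟩
          left; rw [haf]; exact Finset.le_max' _ c hcm
        · exact Or.inr (Finset.min'_le _ c (Finset.mem_filter.mpr ⟨hc, le_of_not_gt hct⟩))
      have hlip : |ψ t - ψ b| ≤ (b - t) * L := by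
        have h := lip_phi k m n hk1 (fun i => -x i) (fun j => -y j)
          (s := -b) (t := -t) (by linarith) (by linarith)
        simp only [neg_sub_neg, abs_neg] at h
        rw [hψ, hL, hS]
        exact h
      have h1 : |ψ t| ≤ |ψ b| + (b - t) * L := by
        have := abs_sub_abs_le_abs_sub (ψ t) (ψ b)
        linarith
      have h2 : (b - t) * L ≤ δ * L := mul_le_mul_of_nonneg_right (by linarith) hL0
      have h3 : δ * L = L * δ := mul_comm _ _
      linarith
    · have hψt : ψ t = 0 := by
        rw [hψ]
        have hx : (∑ i, max (t - x i) 0 ^ k) = 0 := Finset.sum_eq_zero fun i _ => by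
          have hle : ¬ x i < t := fun h => hB ⟨x i, Finset.mem_filter.mpr ⟨hxZ i, h⟩⟩
          rw [max_eq_right (by push_neg at hle; linarith)]
          exact zero_pow (by omega)
        have hy : (∑ j, max (t - y j) 0 ^ k) = 0 := Finset.sum_eq_zero fun j _ => by
          have hle : ¬ y j < t := fun h => hB ⟨y j, Finset.mem_filter.mpr ⟨hyZ j, h⟩⟩
          rw [max_eq_right (by push_neg at hle; linarith)]
          exact zero_pow (by omega)
        simp only [hx, hy]
        ring
      rw [hψt]
      simpa using by linarith
  haveI neIci : Nonempty (Set.Ici (0:ℝ)) := ⟨⟨0, Set.self_mem_Ici⟩⟩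
  haveI neIic : Nonempty (Set.Iic (0:ℝ)) := ⟨⟨0, Set.self_mem_Iic⟩⟩
  have bddφ : BddAbove (Set.range fun t : Set.Ici (0:ℝ) => |φ ↑t|) :=
    ⟨Tstar + L * δ, by rintro v ⟨u, rfl⟩; exact keyφ u u.2⟩
  have bddψ : BddAbove (Set.range fun t : Set.Iic (0:ℝ) => |ψ ↑t|) :=
    ⟨Tstar + L * δ, by rintro v ⟨u, rfl⟩; exact keyψ u u.2⟩
  have hT1 : T ≤ Tstar + L * δ := by
    rw [hT]
    exact max_le (ciSup_le fun u => keyφ u u.2) (ciSup_le fun u => keyψ u u.2)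
  have hT2 : Tstar ≤ T := by
    rw [hTstar, hT]
    apply max_le
    · exact ciSup_le fun u => le_trans (le_ciSup bddφ ⟨u.1, u.2.2⟩) (le_max_left _ _)
    · exact ciSup_le fun u => le_trans (le_ciSup bddψ ⟨u.1, u.2.2⟩) (le_max_right _ _)
  constructor
  · linarith
  · have hEq : L * δ = (δ / (Nat.factorial (k - 1) : ℝ)) * S := by rw [hL]; ring
    linarith
end

section
/- Let k ≥ 1 be an integer and let x_1,…,x_m and y_1,…,y_n be real numbers (m, n ≥ 1). Define φ(t) = (1/k!)((1/m)∑_{i=1}^m (x_i−t)_+^k − (1/n)∑_{j=1}^n (y_j−t)_+^k). Then for all 0 ≤ s ≤ t, |φ(t) − φ(s)| ≤ (t−s) · (1/(k−1)!) ((1/m)∑_{i=1}^m |x_i|^{k−1} + (1/n)∑_{j=1}^n |y_j|^{k−1}). -/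
/-! For `t ≥ 0` the map `t ↦ (x - t)₊` is 1-Lipschitz with values in `[0, |x|]`, and
`|a ^ k - b ^ k| ≤ k |a - b| max(|a|, |b|) ^ (k - 1)`, so each summand `(x - t)₊ ^ k` is
`k |x| ^ (k - 1)`-Lipschitz on `[0, ∞)`; averaging and `k / k! = 1 / (k - 1)!` give the bound. -/

open MeasureTheory Filter Set

lemma abs_posPart_sub_pow_sub_le (k : ℕ) (x : ℝ) {s t : ℝ} (hs : 0 ≤ s) (hst : s ≤ t) :
    |max (x - t) 0 ^ k - max (x - s) 0 ^ k| ≤ (t - s) * k * |x| ^ (k - 1) := by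
  have hdiff : |max (x - t) 0 - max (x - s) 0| ≤ t - s := by
    refine (abs_max_sub_max_le_abs _ _ _).trans ?_
    rw [show x - t - (x - s) = -(t - s) by ring, abs_neg, abs_of_nonneg (sub_nonneg.2 hst)]
  have hle : ∀ u, 0 ≤ u → |max (x - u) 0| ≤ |x| := fun u hu => by
    rw [abs_of_nonneg (le_max_right _ _)]
    exact max_le (by linarith [le_abs_self x]) (abs_nonneg x)
  have hbound : max |max (x - t) 0| |max (x - s) 0| ≤ |x| :=
    max_le (hle t (hs.trans hst)) (hle s hs)
  calc |max (x - t) 0 ^ k - max (x - s) 0 ^ k|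
      ≤ |max (x - t) 0 - max (x - s) 0| * k * max |max (x - t) 0| |max (x - s) 0| ^ (k - 1) :=
        abs_pow_sub_pow_le ..
    _ ≤ (t - s) * k * |x| ^ (k - 1) := by gcongr

lemma abs_sum_posPart_sub_pow_sub_le {ι : Type*} [Fintype ι] (k : ℕ) (x : ι → ℝ) {s t : ℝ}
    (hs : 0 ≤ s) (hst : s ≤ t) :
    |∑ i, max (x i - t) 0 ^ k - ∑ i, max (x i - s) 0 ^ k| ≤ (t - s) * k * ∑ i, |x i| ^ (k - 1) := by
  rw [← Finset.sum_sub_distrib, Finset.mul_sum]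
  exact (Finset.abs_sum_le_sum_abs _ _).trans
    (Finset.sum_le_sum fun i _ => abs_posPart_sub_pow_sub_le k (x i) hs hst)

lemma Nat.cast_div_factorial_eq_one_div_factorial_pred {k : ℕ} (hk : k ≠ 0) :
    (k : ℝ) / k.factorial = 1 / (k - 1).factorial := by
  rw [← Nat.mul_factorial_pred hk, Nat.cast_mul, div_mul_cancel_left₀ (by exact_mod_cast hk),
    one_div]

theorem stmt5_general (k m n : ℕ) (hk : 1 ≤ k)
    (x : Fin m → ℝ) (y : Fin n → ℝ)
    (φ : ℝ → ℝ)
    (hφ : φ = fun t : ℝ => (1 / (Nat.factorial k : ℝ)) *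
      ((1 / m : ℝ) * ∑ i, max (x i - t) 0 ^ k - (1 / n : ℝ) * ∑ j, max (y j - t) 0 ^ k))
    (s t : ℝ) (hs : 0 ≤ s) (hst : s ≤ t) :
    |φ t - φ s| ≤ (t - s) * ((1 / (Nat.factorial (k - 1) : ℝ)) *
      ((1 / m : ℝ) * ∑ i, |x i| ^ (k - 1) + (1 / n : ℝ) * ∑ j, |y j| ^ (k - 1))) := by
  subst hφ
  set X := fun u : ℝ => ∑ i, max (x i - u) 0 ^ k
  set Y := fun u : ℝ => ∑ j, max (y j - u) 0 ^ k
  have hX : |X t - X s| ≤ (t - s) * k * ∑ i, |x i| ^ (k - 1) :=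
    abs_sum_posPart_sub_pow_sub_le k x hs hst
  have hY : |Y t - Y s| ≤ (t - s) * k * ∑ j, |y j| ^ (k - 1) :=
    abs_sum_posPart_sub_pow_sub_le k y hs hst
  rw [← Nat.cast_div_factorial_eq_one_div_factorial_pred (by omega)]
  calc |1 / (k.factorial : ℝ) * (1 / m * X t - 1 / n * Y t)
        - 1 / (k.factorial : ℝ) * (1 / m * X s - 1 / n * Y s)|
      = 1 / (k.factorial : ℝ) * |1 / m * (X t - X s) - 1 / n * (Y t - Y s)| := by
        rw [← mul_sub, abs_mul, abs_of_nonneg (by positivity)]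
        congr 2
        ring
    _ ≤ 1 / (k.factorial : ℝ) * (1 / m * |X t - X s| + 1 / n * |Y t - Y s|) := by
        gcongr
        refine (abs_sub _ _).trans_eq ?_
        rw [abs_mul, abs_mul, abs_one_div, abs_one_div, Nat.abs_cast, Nat.abs_cast]
    _ ≤ 1 / (k.factorial : ℝ) * (1 / m * ((t - s) * k * ∑ i, |x i| ^ (k - 1))
          + 1 / n * ((t - s) * k * ∑ j, |y j| ^ (k - 1))) := by gcongr
    _ = _ := by ring

theorem stmt5 (k m n : ℕ) (hk : 1 ≤ k) (hm : 1 ≤ m) (hn : 1 ≤ n)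
    (x : Fin m → ℝ) (y : Fin n → ℝ)
    (φ : ℝ → ℝ)
    (hφ : φ = fun t : ℝ => (1 / (Nat.factorial k : ℝ)) *
      ((1 / m : ℝ) * ∑ i, max (x i - t) 0 ^ k - (1 / n : ℝ) * ∑ j, max (y j - t) 0 ^ k))
    (s t : ℝ) (hs : 0 ≤ s) (hst : s ≤ t) :
    |φ t - φ s| ≤ (t - s) * ((1 / (Nat.factorial (k - 1) : ℝ)) *
      ((1 / m : ℝ) * ∑ i, |x i| ^ (k - 1) + (1 / n : ℝ) * ∑ j, |y j| ^ (k - 1))) :=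
  stmt5_general k m n hk x y φ hφ s t hs hst
end

section
/- Let k ≥ 1 be an integer, δ > 0, and let P be a Borel probability measure on ℝ with ∫|x|^{2k+δ} dP(x) ≤ M < ∞. Then for all 0 ≤ s ≤ t, ∫ ((x−s)_+^k − (x−t)_+^k)^2 dP(x) ≤ k^2 (t−s)^2 M^{(2k−2)/(2k+δ)}. -/
/-!
Pointwise, `|a ^ k - b ^ k| ≤ k |a - b| max(|a|, |b|) ^ (k - 1)` together with the
1-Lipschitz property of `max · 0` gives
`|(x - s)₊ ^ k - (x - t)₊ ^ k| ≤ k (t - s) |x| ^ (k - 1)`. Squaring and integrating leaves the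
moment `∫ |x| ^ (2k - 2)`, which Jensen's inequality for the concave map
`y ↦ y ^ ((2k - 2) / (2k + δ))`, applied to `|x| ^ (2k + δ)`, bounds by
`(∫ |x| ^ (2k + δ)) ^ ((2k - 2) / (2k + δ))`.
-/

open MeasureTheory Set

lemma abs_truncPow_sub_truncPow_le (k : ℕ) {s t : ℝ} (hs : 0 ≤ s) (ht : 0 ≤ t) (x : ℝ) :
    |max (x - s) 0 ^ k - max (x - t) 0 ^ k| ≤ k * |t - s| * |x| ^ (k - 1) := by
  have hle : ∀ {r : ℝ}, 0 ≤ r → |max (x - r) 0| ≤ |x| := fun hr => by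
    rw [abs_of_nonneg (le_max_right _ _)]
    exact max_le (by linarith [le_abs_self x]) (abs_nonneg x)
  calc |max (x - s) 0 ^ k - max (x - t) 0 ^ k|
      ≤ |max (x - s) 0 - max (x - t) 0| * k * max |max (x - s) 0| |max (x - t) 0| ^ (k - 1) :=
        abs_pow_sub_pow_le _ _ k
    _ ≤ |(x - s) - (x - t)| * k * |x| ^ (k - 1) := by
        gcongr ?_ * _ * ?_ ^ _
        · exact abs_max_sub_max_le_abs _ _ _
        · exact max_le (hle hs) (hle ht)
    _ = k * |t - s| * |x| ^ (k - 1) := by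
        rw [sub_sub_sub_cancel_left, abs_sub_comm]; ring

lemma truncPow_sub_truncPow_sq_le {k : ℕ} (hk : 1 ≤ k) {s t : ℝ} (hs : 0 ≤ s) (ht : 0 ≤ t)
    (x : ℝ) :
    (max (x - s) 0 ^ k - max (x - t) 0 ^ k) ^ 2 ≤
      (k : ℝ) ^ 2 * (t - s) ^ 2 * |x| ^ ((2 * k : ℝ) - 2) := by
  have hexp : (2 * k : ℝ) - 2 = (((k - 1) * 2 : ℕ) : ℝ) := by
    push_cast [Nat.cast_sub hk]; ring
  rw [hexp, Real.rpow_natCast, ← sq_abs, pow_mul, ← sq_abs (t - s), ← mul_pow, ← mul_pow]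
  gcongr
  exact abs_truncPow_sub_truncPow_le k hs ht x

lemma integral_norm_rpow_le_rpow_integral_norm_rpow {α E : Type*} [MeasurableSpace α]
    [NormedAddCommGroup E] {μ : Measure α} [IsProbabilityMeasure μ] {f : α → E}
    (hf : AEStronglyMeasurable f μ) {p q : ℝ} (hp : 0 ≤ p) (hpq : p ≤ q)
    (hint : Integrable (fun x ↦ ‖f x‖ ^ q) μ) :
    ∫ x, ‖f x‖ ^ p ∂μ ≤ (∫ x, ‖f x‖ ^ q ∂μ) ^ (p / q) := by
  rcases (hp.trans hpq).eq_or_lt with rfl | hq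
  · obtain rfl : p = 0 := le_antisymm hpq hp
    simp
  have hcomp : ∀ x, (‖f x‖ ^ q) ^ (p / q) = ‖f x‖ ^ p := fun x => by
    rw [← Real.rpow_mul (norm_nonneg _), mul_div_cancel₀ _ hq.ne']
  have hpint : Integrable (fun x ↦ ‖f x‖ ^ p) μ :=
    integrable_norm_rpow_of_le hf hp hq.le hpq hint
  have hr : 0 ≤ p / q := div_nonneg hp hq.le
  have jensen := (Real.concaveOn_rpow hr ((div_le_one hq).2 hpq)).le_map_integral
    (Real.continuous_rpow_const hr).continuousOn isClosed_Ici
    (ae_of_all _ fun x => Real.rpow_nonneg (norm_nonneg _) q) hint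
    (by simpa only [Function.comp_def, hcomp] using hpint)
  simpa only [hcomp] using jensen

theorem stmt6 (k : ℕ) (hk : 1 ≤ k) (δ : ℝ) (hδ : 0 < δ) (M : ℝ)
    (P : Measure ℝ) [IsProbabilityMeasure P]
    (hint : Integrable (fun x : ℝ => |x| ^ ((2 * k : ℝ) + δ)) P)
    (hM : (∫ x, |x| ^ ((2 * k : ℝ) + δ) ∂P) ≤ M)
    (s t : ℝ) (hs : 0 ≤ s) (hst : s ≤ t) :
    (∫ x, (max (x - s) 0 ^ k - max (x - t) 0 ^ k) ^ 2 ∂P)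
      ≤ (k : ℝ) ^ 2 * (t - s) ^ 2 * M ^ (((2 * k : ℝ) - 2) / ((2 * k : ℝ) + δ)) := by
  set p : ℝ := (2 * k : ℝ) - 2
  set q : ℝ := (2 * k : ℝ) + δ
  have hp : 0 ≤ p := by simp only [p]; linarith [(Nat.one_le_cast (α := ℝ)).2 hk]
  have hpq : p ≤ q := by simp only [p, q]; linarith
  have hint' : Integrable (fun x : ℝ ↦ ‖x‖ ^ q) P := by simpa only [Real.norm_eq_abs] using hint
  have hpint : Integrable (fun x : ℝ ↦ |x| ^ p) P := by
    simpa only [Real.norm_eq_abs, id_eq] using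
      integrable_norm_rpow_of_le aestronglyMeasurable_id hp (hp.trans hpq) hpq hint'
  have hmoment : ∫ x, |x| ^ p ∂P ≤ (∫ x, |x| ^ q ∂P) ^ (p / q) := by
    simpa only [Real.norm_eq_abs, id_eq] using
      integral_norm_rpow_le_rpow_integral_norm_rpow aestronglyMeasurable_id hp hpq hint'
  calc (∫ x, (max (x - s) 0 ^ k - max (x - t) 0 ^ k) ^ 2 ∂P)
      ≤ ∫ x, (k : ℝ) ^ 2 * (t - s) ^ 2 * |x| ^ p ∂P :=
        integral_mono_of_nonneg (ae_of_all _ fun x => sq_nonneg _) (hpint.const_mul _)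
          (ae_of_all _ (truncPow_sub_truncPow_sq_le hk hs (hs.trans hst)))
    _ = (k : ℝ) ^ 2 * (t - s) ^ 2 * ∫ x, |x| ^ p ∂P := integral_const_mul _ _
    _ ≤ (k : ℝ) ^ 2 * (t - s) ^ 2 * (∫ x, |x| ^ q ∂P) ^ (p / q) := by gcongr
    _ ≤ (k : ℝ) ^ 2 * (t - s) ^ 2 * M ^ (p / q) := by gcongr
end

section
/- Let k ≥ 1 be an integer and let P and Q be Borel probability measures on ℝ with ∫|x|^k dP(x) < ∞ and ∫|x|^k dQ(x) < ∞, whose first k moments match: ∫ x^j dP(x) = ∫ x^j dQ(x) for j = 1,…,k. Define Φ_0 = F_P − F_Q and recursively Φ_{j+1}(x) = ∫_x^∞ Φ_j(t) dt for 0 ≤ j ≤ k−1 (each of these integrals being absolutely convergent). Then max{ sup_{t ≥ 0} (1/k!)|∫ (x−t)_+^k dP(x) − ∫ (x−t)_+^k dQ(x)| , sup_{t ≤ 0} (1/k!)|∫ (t−x)_+^k dP(x) − ∫ (t−x)_+^k dQ(x)| } = sup_{x ∈ ℝ} |Φ_k(x)|. -/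
open MeasureTheory Filter Set

/-- Iterated tail integral: `tailIter g 0 = g` and
`tailIter g (j+1) x = ∫_x^∞ tailIter g j (t) dt`. -/
noncomputable def tailIter (g : ℝ → ℝ) : ℕ → ℝ → ℝ
  | 0 => g
  | j + 1 => fun x => ∫ t in Set.Ioi x, tailIter g j t

open scoped ENNReal NNReal

namespace Stmt14

noncomputable def mT (μ : Measure ℝ) : ℕ → ℝ → ℝ
  | 0 => fun t => (μ (Set.Ioi t)).toReal
  | j + 1 => fun t => ∫ x, max (x - t) 0 ^ (j + 1) ∂μ

lemma integ_bound {μ : Measure ℝ} [IsProbabilityMeasure μ] {k : ℕ}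
    (hμ : Integrable (fun x : ℝ => |x| ^ k) μ) {j : ℕ} (hj : j ≤ k) (c : ℝ) :
    Integrable (fun x : ℝ => (|x| + |c|) ^ j) μ := by
  have hb : ∀ x : ℝ, (|x| + |c|) ^ j ≤ 2 ^ k * (1 + |c|) ^ k * (1 + |x| ^ k) := by
    intro x
    have h0 : (0:ℝ) ≤ |x| := abs_nonneg x
    have h0c : (0:ℝ) ≤ |c| := abs_nonneg c
    have h1 : (|x| + |c|) ^ j ≤ (1 + |x| + |c|) ^ j :=
      pow_le_pow_left₀ (by positivity) (by linarith) j
    have h2 : (1 + |x| + |c|) ^ j ≤ (1 + |x| + |c|) ^ k :=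
      pow_le_pow_right₀ (by linarith) hj
    have h3 : (1 + |x| + |c|) ≤ (1 + |c|) * (1 + |x|) := by nlinarith
    have h4 : (1 + |x| + |c|) ^ k ≤ ((1 + |c|) * (1 + |x|)) ^ k :=
      pow_le_pow_left₀ (by positivity) h3 k
    have h5 : (1 + |x|) ^ k ≤ 2 ^ k * (1 + |x| ^ k) := by
      have hm : (1 + |x|) ≤ 2 * max 1 |x| := by
        rcases le_total 1 |x| with h | h
        · rw [max_eq_right h]; linarith
        · rw [max_eq_left h]; linarith
      have hmk : (max 1 |x|) ^ k ≤ 1 + |x| ^ k := by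
        rcases le_total 1 |x| with h | h
        · rw [max_eq_right h]; nlinarith [pow_nonneg h0 k]
        · rw [max_eq_left h, one_pow]
          nlinarith [pow_nonneg (abs_nonneg x) k]
      calc (1 + |x|) ^ k ≤ (2 * max 1 |x|) ^ k := pow_le_pow_left₀ (by positivity) hm k
        _ = 2 ^ k * (max 1 |x|) ^ k := mul_pow 2 _ k
        _ ≤ 2 ^ k * (1 + |x| ^ k) := by
            have : (0:ℝ) ≤ 2 ^ k := by positivity
            nlinarith
    calc (|x| + |c|) ^ j ≤ ((1 + |c|) * (1 + |x|)) ^ k := le_trans h1 (le_trans h2 h4)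
      _ = (1 + |c|) ^ k * (1 + |x|) ^ k := mul_pow _ _ k
      _ ≤ (1 + |c|) ^ k * (2 ^ k * (1 + |x| ^ k)) := by
          have : (0:ℝ) ≤ (1 + |c|) ^ k := by positivity
          nlinarith
      _ = 2 ^ k * (1 + |c|) ^ k * (1 + |x| ^ k) := by ring
  have hint : Integrable (fun x : ℝ => 2 ^ k * (1 + |c|) ^ k * (1 + |x| ^ k)) μ :=
    ((integrable_const (1:ℝ)).add hμ).const_mul _
  refine hint.mono' ?_ ?_
  · exact ((continuous_abs.add continuous_const).pow j).aestronglyMeasurable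
  · filter_upwards with x
    rw [Real.norm_eq_abs, abs_of_nonneg (by positivity)]
    exact hb x

lemma integ_trunc {μ : Measure ℝ} [IsProbabilityMeasure μ] {k : ℕ}
    (hμ : Integrable (fun x : ℝ => |x| ^ k) μ) {j : ℕ} (hj : j ≤ k) (t : ℝ) :
    Integrable (fun x : ℝ => max (x - t) 0 ^ j) μ := by
  refine (integ_bound hμ hj t).mono' ?_ ?_
  · exact (((continuous_id.sub continuous_const).max continuous_const).pow j).aestronglyMeasurable
  · filter_upwards with x
    rw [Real.norm_eq_abs, abs_of_nonneg (by positivity)]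
    refine pow_le_pow_left₀ (le_max_right _ _) (max_le ?_ (by positivity)) j
    have := abs_nonneg x
    have h1 := neg_abs_le x
    have h2 := le_abs_self x
    have h3 := neg_abs_le t
    have h4 := le_abs_self t
    linarith

lemma integ_trunc' {μ : Measure ℝ} [IsProbabilityMeasure μ] {k : ℕ}
    (hμ : Integrable (fun x : ℝ => |x| ^ k) μ) {j : ℕ} (hj : j ≤ k) (t : ℝ) :
    Integrable (fun x : ℝ => max (t - x) 0 ^ j) μ := by
  refine (integ_bound hμ hj t).mono' ?_ ?_
  · exact (((continuous_const.sub continuous_id).max continuous_const).pow j).aestronglyMeasurable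
  · filter_upwards with x
    rw [Real.norm_eq_abs, abs_of_nonneg (by positivity)]
    refine pow_le_pow_left₀ (le_max_right _ _) (max_le ?_ (by positivity)) j
    have h1 := neg_abs_le x
    have h2 := le_abs_self x
    have h3 := neg_abs_le t
    have h4 := le_abs_self t
    linarith

lemma integ_xpow {μ : Measure ℝ} [IsProbabilityMeasure μ] {k : ℕ}
    (hμ : Integrable (fun x : ℝ => |x| ^ k) μ) {j : ℕ} (hj : j ≤ k) :
    Integrable (fun x : ℝ => x ^ j) μ := by
  refine (integ_bound hμ hj 0).mono' ?_ ?_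
  · exact (continuous_pow j).aestronglyMeasurable
  · filter_upwards with x
    rw [Real.norm_eq_abs, abs_pow]
    refine pow_le_pow_left₀ (abs_nonneg x) ?_ j
    simp


noncomputable def Gf (j : ℕ) (s x : ℝ) : ℝ≥0∞ :=
  ENNReal.ofReal (if s < x then (x - s) ^ j else 0)

lemma Gf_meas (j : ℕ) : Measurable (Function.uncurry (Gf j)) := by
  have : Function.uncurry (Gf j)
      = fun p : ℝ × ℝ => ENNReal.ofReal (if p.1 < p.2 then (p.2 - p.1) ^ j else 0) := rfl
  rw [this]
  exact ENNReal.measurable_ofReal.comp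
    (Measurable.ite (measurableSet_lt measurable_fst measurable_snd) (by fun_prop)
      measurable_const)

lemma key (μ : Measure ℝ) [IsProbabilityMeasure μ] {k : ℕ}
    (hμ : Integrable (fun x : ℝ => |x| ^ k) μ) {j : ℕ} (hjk : j + 1 ≤ k) (t : ℝ) :
    IntegrableOn (mT μ j) (Set.Ioi t) volume ∧
      ∫ s in Set.Ioi t, mT μ j s = mT μ (j + 1) t / ((j : ℝ) + 1) := by
  have hjk' : j ≤ k := le_trans (Nat.le_succ j) hjk
  have hmT : ∀ s : ℝ, mT μ j s = (∫⁻ x, Gf j s x ∂μ).toReal := by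
    intro s
    cases j with
    | zero =>
        have h1 : (fun x : ℝ => Gf 0 s x) = (Set.Ioi s).indicator (fun _ => (1 : ℝ≥0∞)) := by
          funext x
          by_cases h : s < x <;> simp [Gf, h, Set.indicator_apply, Set.mem_Ioi]
        simp only [mT, h1]
        rw [lintegral_indicator measurableSet_Ioi]
        simp
    | succ m =>
        have hpt : (fun x : ℝ => Gf (m + 1) s x)
            = fun x => ENNReal.ofReal (max (x - s) 0 ^ (m + 1)) := by
          funext x
          by_cases h : s < x
          · simp only [Gf, if_pos h]
            rw [max_eq_left (by linarith)]
          · simp only [Gf, if_neg h]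
            rw [max_eq_right (by push_neg at h; linarith), zero_pow (Nat.succ_ne_zero m)]
        rw [hpt]
        simp only [mT]
        rw [integral_eq_lintegral_of_nonneg_ae]
        · filter_upwards with x; positivity
        · exact (((continuous_id.sub continuous_const).max continuous_const).pow
            (m + 1)).aestronglyMeasurable
  have hswap : ∫⁻ s in Set.Ioi t, ∫⁻ x, Gf j s x ∂μ
      = ∫⁻ x, (∫⁻ s in Set.Ioi t, Gf j s x) ∂μ :=
    lintegral_lintegral_swap (Gf_meas j).aemeasurable
  have hinner : ∀ x : ℝ, (∫⁻ s in Set.Ioi t, Gf j s x)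
      = ENNReal.ofReal (max (x - t) 0 ^ (j + 1) / ((j : ℝ) + 1)) := by
    intro x
    have hind : (fun s : ℝ => Gf j s x)
        = (Set.Iio x).indicator (fun s => ENNReal.ofReal ((x - s) ^ j)) := by
      funext s
      by_cases h : s < x <;> simp [Gf, h, Set.indicator_apply, Set.mem_Iio]
    rw [hind, lintegral_indicator measurableSet_Iio,
      Measure.restrict_restrict measurableSet_Iio, Set.Iio_inter_Ioi]
    by_cases h : t < x
    · have hnn : 0 ≤ᵐ[volume.restrict (Set.Ioo t x)] fun s : ℝ => (x - s) ^ j := by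
        filter_upwards [ae_restrict_mem measurableSet_Ioo] with s hs
        have h2 : (0:ℝ) ≤ x - s := by linarith [hs.2]
        positivity
      have hint : IntegrableOn (fun s : ℝ => (x - s) ^ j) (Set.Ioo t x) volume :=
        (((continuous_const.sub continuous_id).pow j).integrableOn_Icc
          (a := t) (b := x)).mono_set Set.Ioo_subset_Icc_self
      rw [← ofReal_integral_eq_lintegral_ofReal hint hnn]
      congr 1
      rw [← integral_Ioc_eq_integral_Ioo, ← intervalIntegral.integral_of_le h.le]
      have h3 := intervalIntegral.integral_comp_sub_left (a := t) (b := x)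
        (fun u : ℝ => u ^ j) x
      rw [h3, sub_self, integral_pow, zero_pow (Nat.succ_ne_zero j),
        max_eq_left (by linarith)]
      ring
    · rw [Set.Ioo_eq_empty h, Measure.restrict_empty, lintegral_zero_measure]
      push_neg at h
      rw [max_eq_right (by linarith), zero_pow (Nat.succ_ne_zero j), zero_div,
        ENNReal.ofReal_zero]
  have hintR : Integrable (fun x : ℝ => max (x - t) 0 ^ (j + 1) / ((j : ℝ) + 1)) μ :=
    (integ_trunc hμ hjk t).div_const _
  have htot : ∫⁻ s in Set.Ioi t, (∫⁻ x, Gf j s x ∂μ)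
      = ENNReal.ofReal ((∫ x, max (x - t) 0 ^ (j + 1) ∂μ) / ((j : ℝ) + 1)) := by
    rw [hswap]
    simp_rw [hinner]
    rw [← ofReal_integral_eq_lintegral_ofReal hintR (by filter_upwards with x; positivity)]
    rw [integral_div]
  have hH : Measurable fun s : ℝ => ∫⁻ x, Gf j s x ∂μ :=
    Measurable.lintegral_prod_right (Gf_meas j)
  have hne : ∫⁻ s in Set.Ioi t, (∫⁻ x, Gf j s x ∂μ) ≠ ⊤ := by
    rw [htot]; exact ENNReal.ofReal_ne_top
  constructor
  · have h4 := integrable_toReal_of_lintegral_ne_top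
      (μ := volume.restrict (Set.Ioi t)) hH.aemeasurable hne
    have heq : (fun s : ℝ => (∫⁻ x, Gf j s x ∂μ).toReal) = mT μ j := by
      funext s; rw [hmT s]
    rwa [heq] at h4
  · have h5 : ∫ s in Set.Ioi t, mT μ j s
        = ∫ s in Set.Ioi t, (∫⁻ x, Gf j s x ∂μ).toReal := by
      apply integral_congr_ae
      filter_upwards with s
      rw [hmT s]
    have h6 := integral_toReal (μ := volume.restrict (Set.Ioi t)) hH.aemeasurable
      (ae_lt_top hH hne)
    rw [h5, h6, htot, ENNReal.toReal_ofReal]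
    · simp only [mT]
    · apply div_nonneg _ (by positivity)
      apply integral_nonneg; intro x; positivity


lemma phi (P Q : Measure ℝ) [IsProbabilityMeasure P] [IsProbabilityMeasure Q] {k : ℕ}
    (hP : Integrable (fun x : ℝ => |x| ^ k) P) (hQ : Integrable (fun x : ℝ => |x| ^ k) Q)
    {j : ℕ} (hj : j ≤ k) (t : ℝ) :
    tailIter (fun t : ℝ => (P (Set.Iic t)).toReal - (Q (Set.Iic t)).toReal) j t
      = -(1 / (Nat.factorial j : ℝ)) * (mT P j t - mT Q j t) := by
  induction j generalizing t with
  | zero =>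
      have hc : ∀ (μ : Measure ℝ) [IsProbabilityMeasure μ],
          (μ (Set.Iic t)).toReal = 1 - (μ (Set.Ioi t)).toReal := by
        intro μ _
        have h1 := prob_compl_eq_one_sub (μ := μ) (measurableSet_Ioi (a := t))
        rw [Set.compl_Ioi] at h1
        rw [h1, ENNReal.toReal_sub_of_le prob_le_one ENNReal.one_ne_top, ENNReal.toReal_one]
      show (P (Set.Iic t)).toReal - (Q (Set.Iic t)).toReal = _
      rw [hc P, hc Q]
      simp only [mT, Nat.factorial_zero, Nat.cast_one]
      ring
  | succ m ih =>
      have hm1 : m + 1 ≤ k := hj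
      have hm : m ≤ k := le_trans (Nat.le_succ m) hj
      have hkP := key P hP hm1 t
      have hkQ := key Q hQ hm1 t
      show (∫ s in Set.Ioi t,
          tailIter (fun t : ℝ => (P (Set.Iic t)).toReal - (Q (Set.Iic t)).toReal) m s) = _
      have hcong : ∫ s in Set.Ioi t,
          tailIter (fun t : ℝ => (P (Set.Iic t)).toReal - (Q (Set.Iic t)).toReal) m s
          = ∫ s in Set.Ioi t, -(1 / (Nat.factorial m : ℝ)) * (mT P m s - mT Q m s) := by
        apply integral_congr_ae
        filter_upwards with s
        exact ih hm s
      rw [hcong, integral_const_mul, integral_sub hkP.1 hkQ.1, hkP.2, hkQ.2]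
      have hf : (Nat.factorial m : ℝ) ≠ 0 := Nat.cast_ne_zero.2 (Nat.factorial_ne_zero m)
      have hm1' : ((m : ℝ) + 1) ≠ 0 := by positivity
      rw [div_sub_div_same, Nat.factorial_succ]
      have hfac : (((m + 1) * m.factorial : ℕ) : ℝ) = ((m : ℝ) + 1) * (m.factorial : ℝ) := by
        push_cast; ring
      rw [hfac, one_div, one_div, mul_inv]
      ring

lemma moment_eq (P Q : Measure ℝ) [IsProbabilityMeasure P] [IsProbabilityMeasure Q] {k : ℕ}
    (hP : Integrable (fun x : ℝ => |x| ^ k) P) (hQ : Integrable (fun x : ℝ => |x| ^ k) Q)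
    (hmom : ∀ j : ℕ, 1 ≤ j → j ≤ k → (∫ x, x ^ j ∂P) = ∫ x, x ^ j ∂Q) (t : ℝ) :
    ∫ x, (x - t) ^ k ∂P = ∫ x, (x - t) ^ k ∂Q := by
  have expand : ∀ (μ : Measure ℝ), IsProbabilityMeasure μ →
      Integrable (fun x : ℝ => |x| ^ k) μ →
      ∫ x, (x - t) ^ k ∂μ
        = ∑ m ∈ Finset.range (k + 1), (-t) ^ (k - m) * (k.choose m : ℝ) * ∫ x, x ^ m ∂μ := by
    intro μ hinst hμ
    have hpt : ∀ x : ℝ, (x - t) ^ k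
        = ∑ m ∈ Finset.range (k + 1), x ^ m * ((-t) ^ (k - m) * (k.choose m : ℝ)) := by
      intro x
      rw [sub_eq_add_neg, add_pow]
      exact Finset.sum_congr rfl fun m _ => by ring
    have h1 : ∫ x, (x - t) ^ k ∂μ
        = ∑ m ∈ Finset.range (k + 1),
            ∫ x, x ^ m * ((-t) ^ (k - m) * (k.choose m : ℝ)) ∂μ := by
      rw [← integral_finset_sum]
      · exact integral_congr_ae (by filter_upwards with x; rw [hpt x])
      · intro m hm
        exact (integ_xpow hμ (Nat.lt_succ_iff.mp (Finset.mem_range.mp hm))).mul_const _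
    rw [h1]
    exact Finset.sum_congr rfl fun m _ => by rw [integral_mul_const]; ring
  rw [expand P inferInstance hP, expand Q inferInstance hQ]
  refine Finset.sum_congr rfl fun m hm => ?_
  rcases Nat.eq_zero_or_pos m with h0 | h0
  · subst h0; simp
  · rw [hmom m h0 (Nat.lt_succ_iff.mp (Finset.mem_range.mp hm))]

lemma sym_abs (P Q : Measure ℝ) [IsProbabilityMeasure P] [IsProbabilityMeasure Q] {k : ℕ}
    (hk : 1 ≤ k)
    (hP : Integrable (fun x : ℝ => |x| ^ k) P) (hQ : Integrable (fun x : ℝ => |x| ^ k) Q)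
    (hmom : ∀ j : ℕ, 1 ≤ j → j ≤ k → (∫ x, x ^ j ∂P) = ∫ x, x ^ j ∂Q) (t : ℝ) :
    |(∫ x, max (t - x) 0 ^ k ∂P) - ∫ x, max (t - x) 0 ^ k ∂Q|
      = |(∫ x, max (x - t) 0 ^ k ∂P) - ∫ x, max (x - t) 0 ^ k ∂Q| := by
  have hk0 : k ≠ 0 := by omega
  have hpt : ∀ x : ℝ, (x - t) ^ k = max (x - t) 0 ^ k + (-1 : ℝ) ^ k * max (t - x) 0 ^ k := by
    intro x
    rcases le_total t x with h | h
    · rw [max_eq_left (by linarith), max_eq_right (by linarith), zero_pow hk0]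
      ring
    · rw [max_eq_right (by linarith), max_eq_left (by linarith), zero_pow hk0]
      have : x - t = -(t - x) := by ring
      rw [this, neg_pow]
      ring
  have hsplit : ∀ (μ : Measure ℝ), IsProbabilityMeasure μ →
      Integrable (fun x : ℝ => |x| ^ k) μ →
      ∫ x, (x - t) ^ k ∂μ
        = (∫ x, max (x - t) 0 ^ k ∂μ) + (-1 : ℝ) ^ k * ∫ x, max (t - x) 0 ^ k ∂μ := by
    intro μ hinst hμ
    have h1 : ∫ x, (x - t) ^ k ∂μ
        = ∫ x, (max (x - t) 0 ^ k + (-1 : ℝ) ^ k * max (t - x) 0 ^ k) ∂μ :=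
      integral_congr_ae (by filter_upwards with x; rw [hpt x])
    rw [h1, integral_add (integ_trunc hμ le_rfl t) ((integ_trunc' hμ le_rfl t).const_mul _),
      integral_const_mul]
  have hE := moment_eq P Q hP hQ hmom t
  rw [hsplit P inferInstance hP, hsplit Q inferInstance hQ] at hE
  have hD : (-1 : ℝ) ^ k * ((∫ x, max (t - x) 0 ^ k ∂P) - ∫ x, max (t - x) 0 ^ k ∂Q)
      = -((∫ x, max (x - t) 0 ^ k ∂P) - ∫ x, max (x - t) 0 ^ k ∂Q) := by linarith
  calc |(∫ x, max (t - x) 0 ^ k ∂P) - ∫ x, max (t - x) 0 ^ k ∂Q|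
      = |(-1 : ℝ) ^ k * ((∫ x, max (t - x) 0 ^ k ∂P) - ∫ x, max (t - x) 0 ^ k ∂Q)| := by
        rw [abs_mul, abs_pow, abs_neg, abs_one, one_pow, one_mul]
    _ = |(∫ x, max (x - t) 0 ^ k ∂P) - ∫ x, max (x - t) 0 ^ k ∂Q| := by rw [hD, abs_neg]


lemma int_trunc_le (μ : Measure ℝ) [IsProbabilityMeasure μ] {k : ℕ}
    (hμ : Integrable (fun x : ℝ => |x| ^ k) μ) {t : ℝ} (ht : 0 ≤ t) :
    ∫ x, max (x - t) 0 ^ k ∂μ ≤ ∫ x, |x| ^ k ∂μ := by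
  apply integral_mono (integ_trunc hμ le_rfl t) hμ
  intro x
  refine pow_le_pow_left₀ (le_max_right _ _) (max_le ?_ (abs_nonneg x)) k
  have := le_abs_self x
  linarith

lemma int_trunc_le' (μ : Measure ℝ) [IsProbabilityMeasure μ] {k : ℕ}
    (hμ : Integrable (fun x : ℝ => |x| ^ k) μ) {t : ℝ} (ht : t ≤ 0) :
    ∫ x, max (t - x) 0 ^ k ∂μ ≤ ∫ x, |x| ^ k ∂μ := by
  apply integral_mono (integ_trunc' hμ le_rfl t) hμ
  intro x
  refine pow_le_pow_left₀ (le_max_right _ _) (max_le ?_ (abs_nonneg x)) k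
  have := neg_abs_le x
  linarith

lemma abs_D_le (P Q : Measure ℝ) [IsProbabilityMeasure P] [IsProbabilityMeasure Q] {k : ℕ}
    (hk : 1 ≤ k)
    (hP : Integrable (fun x : ℝ => |x| ^ k) P) (hQ : Integrable (fun x : ℝ => |x| ^ k) Q)
    (hmom : ∀ j : ℕ, 1 ≤ j → j ≤ k → (∫ x, x ^ j ∂P) = ∫ x, x ^ j ∂Q) (t : ℝ) :
    |(∫ x, max (x - t) 0 ^ k ∂P) - ∫ x, max (x - t) 0 ^ k ∂Q|
      ≤ (∫ x, |x| ^ k ∂P) + ∫ x, |x| ^ k ∂Q := by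
  have habs : ∀ (μ : Measure ℝ) (f : ℝ → ℝ), (∀ x, 0 ≤ f x) →
      |∫ x, f x ∂μ| = ∫ x, f x ∂μ := fun μ f hf =>
    abs_of_nonneg (integral_nonneg hf)
  rcases le_total 0 t with ht | ht
  · calc |(∫ x, max (x - t) 0 ^ k ∂P) - ∫ x, max (x - t) 0 ^ k ∂Q|
        ≤ |∫ x, max (x - t) 0 ^ k ∂P| + |∫ x, max (x - t) 0 ^ k ∂Q| := abs_sub _ _
      _ ≤ (∫ x, |x| ^ k ∂P) + ∫ x, |x| ^ k ∂Q := by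
          rw [habs P _ (fun x => by positivity), habs Q _ (fun x => by positivity)]
          exact add_le_add (int_trunc_le P hP ht) (int_trunc_le Q hQ ht)
  · rw [← sym_abs P Q hk hP hQ hmom t]
    calc |(∫ x, max (t - x) 0 ^ k ∂P) - ∫ x, max (t - x) 0 ^ k ∂Q|
        ≤ |∫ x, max (t - x) 0 ^ k ∂P| + |∫ x, max (t - x) 0 ^ k ∂Q| := abs_sub _ _
      _ ≤ (∫ x, |x| ^ k ∂P) + ∫ x, |x| ^ k ∂Q := by
          rw [habs P _ (fun x => by positivity), habs Q _ (fun x => by positivity)]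
          exact add_le_add (int_trunc_le' P hP ht) (int_trunc_le' Q hQ ht)

end Stmt14

theorem stmt14 (k : ℕ) (hk : 1 ≤ k) (P Q : Measure ℝ)
    [IsProbabilityMeasure P] [IsProbabilityMeasure Q]
    (hP : Integrable (fun x : ℝ => |x| ^ k) P) (hQ : Integrable (fun x : ℝ => |x| ^ k) Q)
    (hmom : ∀ j : ℕ, 1 ≤ j → j ≤ k → (∫ x, x ^ j ∂P) = ∫ x, x ^ j ∂Q) :
    (∀ j < k, ∀ x : ℝ, IntegrableOn
        (tailIter (fun t : ℝ => (P (Set.Iic t)).toReal - (Q (Set.Iic t)).toReal) j)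
        (Set.Ioi x) volume) ∧
    max
      (⨆ t : Set.Ici (0:ℝ), (1 / (Nat.factorial k : ℝ)) *
        |(∫ x, max (x - (t:ℝ)) 0 ^ k ∂P) - ∫ x, max (x - (t:ℝ)) 0 ^ k ∂Q|)
      (⨆ t : Set.Iic (0:ℝ), (1 / (Nat.factorial k : ℝ)) *
        |(∫ x, max ((t:ℝ) - x) 0 ^ k ∂P) - ∫ x, max ((t:ℝ) - x) 0 ^ k ∂Q|)
      = ⨆ x : ℝ,
          |tailIter (fun t : ℝ => (P (Set.Iic t)).toReal - (Q (Set.Iic t)).toReal) k x| := by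
  open Stmt14 in
  constructor
  · intro j hj x
    have h1 : tailIter (fun t : ℝ => (P (Set.Iic t)).toReal - (Q (Set.Iic t)).toReal) j
        = fun t => -(1 / (Nat.factorial j : ℝ)) * (Stmt14.mT P j t - Stmt14.mT Q j t) :=
      funext fun t => Stmt14.phi P Q hP hQ hj.le t
    rw [h1]
    exact (((Stmt14.key P hP hj x).1.sub (Stmt14.key Q hQ hj x).1).const_mul _)
  · set f : ℝ → ℝ := fun t => (1 / (Nat.factorial k : ℝ)) *
      |(∫ x, max (x - t) 0 ^ k ∂P) - ∫ x, max (x - t) 0 ^ k ∂Q| with hf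
    have hmta : ∀ t : ℝ, Stmt14.mT P k t = ∫ x, max (x - t) 0 ^ k ∂P := by
      intro t
      obtain ⟨m, rfl⟩ : ∃ m, k = m + 1 := ⟨k - 1, by omega⟩
      simp only [Stmt14.mT]
    have hmtb : ∀ t : ℝ, Stmt14.mT Q k t = ∫ x, max (x - t) 0 ^ k ∂Q := by
      intro t
      obtain ⟨m, rfl⟩ : ∃ m, k = m + 1 := ⟨k - 1, by omega⟩
      simp only [Stmt14.mT]
    have habs : ∀ t : ℝ,
        |tailIter (fun t : ℝ => (P (Set.Iic t)).toReal - (Q (Set.Iic t)).toReal) k t| = f t := by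
      intro t
      rw [Stmt14.phi P Q hP hQ le_rfl t, abs_mul, abs_neg,
        abs_of_nonneg (a := 1 / (Nat.factorial k : ℝ)) (by positivity), hmta t, hmtb t, hf]
    have hM : ∀ t : ℝ, f t ≤ (1 / (Nat.factorial k : ℝ)) * ((∫ x, |x| ^ k ∂P) + ∫ x, |x| ^ k ∂Q) := by
      intro t
      exact mul_le_mul_of_nonneg_left (Stmt14.abs_D_le P Q hk hP hQ hmom t) (by positivity)
    have hbdd : BddAbove (Set.range f) := ⟨_, by rintro _ ⟨t, rfl⟩; exact hM t⟩
    have hbdd1 : BddAbove (Set.range fun t : Set.Ici (0:ℝ) => f ↑t) :=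
      ⟨_, by rintro _ ⟨t, rfl⟩; exact hM ↑t⟩
    have hbdd2 : BddAbove (Set.range fun t : Set.Iic (0:ℝ) => f ↑t) :=
      ⟨_, by rintro _ ⟨t, rfl⟩; exact hM ↑t⟩
    haveI hne1 : Nonempty (Set.Ici (0:ℝ)) := ⟨⟨0, Set.mem_Ici.2 le_rfl⟩⟩
    haveI hne2 : Nonempty (Set.Iic (0:ℝ)) := ⟨⟨0, Set.mem_Iic.2 le_rfl⟩⟩
    have e2 : (⨆ t : Set.Iic (0:ℝ), (1 / (Nat.factorial k : ℝ)) *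
        |(∫ x, max ((t:ℝ) - x) 0 ^ k ∂P) - ∫ x, max ((t:ℝ) - x) 0 ^ k ∂Q|)
        = ⨆ t : Set.Iic (0:ℝ), f ↑t := by
      apply iSup_congr
      intro t
      rw [hf]
      rw [Stmt14.sym_abs P Q hk hP hQ hmom ↑t]
    have e3 : (⨆ x : ℝ,
        |tailIter (fun t : ℝ => (P (Set.Iic t)).toReal - (Q (Set.Iic t)).toReal) k x|)
        = ⨆ x : ℝ, f x := iSup_congr habs
    rw [e2, e3]
    apply le_antisymm
    · apply max_le
      · exact ciSup_le fun t => le_ciSup hbdd (t : ℝ)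
      · exact ciSup_le fun t => le_ciSup hbdd (t : ℝ)
    · apply ciSup_le
      intro x
      rcases le_total 0 x with h | h
      · exact le_max_of_le_left (le_ciSup hbdd1 ⟨x, h⟩)
      · exact le_max_of_le_right (le_ciSup hbdd2 ⟨x, h⟩)
end

section
/- Let x_1,…,x_m and y_1,…,y_n be real numbers (m, n ≥ 1). Then sup_{t ∈ ℝ} |(1/m)∑_{i=1}^m 1{x_i ≤ t} − (1/n)∑_{j=1}^n 1{y_j ≤ t}| = max_{t ∈ {x_1,…,x_m} ∪ {y_1,…,y_n}} |(1/m)∑_{i=1}^m 1{x_i ≤ t} − (1/n)∑_{j=1}^n 1{y_j ≤ t}|; that is, the supremum of the absolute difference of the two empirical CDFs over all real t is attained at one of the sample points. -/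
open MeasureTheory Filter Set

theorem stmt19 (m n : ℕ) (hm : 1 ≤ m) (hn : 1 ≤ n) (x : Fin m → ℝ) (y : Fin n → ℝ) :
    (⨆ t : ℝ, |(1 / m : ℝ) * ∑ i, (if x i ≤ t then (1:ℝ) else 0)
        - (1 / n : ℝ) * ∑ j, (if y j ≤ t then (1:ℝ) else 0)|)
      = ⨆ t : {t : ℝ // t ∈ Finset.image x Finset.univ ∪ Finset.image y Finset.univ},
          |(1 / m : ℝ) * ∑ i, (if x i ≤ (t:ℝ) then (1:ℝ) else 0)
            - (1 / n : ℝ) * ∑ j, (if y j ≤ (t:ℝ) then (1:ℝ) else 0)| := by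
  set S := Finset.image x Finset.univ ∪ Finset.image y Finset.univ with hS
  set f : ℝ → ℝ := fun t => |(1 / m : ℝ) * ∑ i, (if x i ≤ t then (1:ℝ) else 0)
        - (1 / n : ℝ) * ∑ j, (if y j ≤ t then (1:ℝ) else 0)| with hf
  have hSne : S.Nonempty := by
    refine Finset.Nonempty.inl ?_
    exact ⟨x ⟨0, hm⟩, Finset.mem_image_of_mem x (Finset.mem_univ _)⟩
  have hxm : ∀ i, x i ∈ S := fun i =>
    Finset.mem_union_left _ (Finset.mem_image_of_mem x (Finset.mem_univ _))
  have hyn : ∀ j, y j ∈ S := fun j =>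
    Finset.mem_union_right _ (Finset.mem_image_of_mem y (Finset.mem_univ _))
  have hbdd : ∀ t, f t ≤ 2 := by
    intro t
    have h1 : (0:ℝ) ≤ (1 / m : ℝ) * ∑ i, (if x i ≤ t then (1:ℝ) else 0) := by
      positivity
    have h2 : (1 / m : ℝ) * ∑ i, (if x i ≤ t then (1:ℝ) else 0) ≤ 1 := by
      have hs : ∑ i, (if x i ≤ t then (1:ℝ) else 0) ≤ m := by
        calc ∑ i, (if x i ≤ t then (1:ℝ) else 0) ≤ ∑ _i : Fin m, (1:ℝ) := by
              apply Finset.sum_le_sum; intro i _; split <;> norm_num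
          _ = m := by simp
      have hm0 : (0:ℝ) < m := by exact_mod_cast hm
      rw [div_mul_eq_mul_div, one_mul, div_le_one hm0]; exact hs
    have h3 : (0:ℝ) ≤ (1 / n : ℝ) * ∑ j, (if y j ≤ t then (1:ℝ) else 0) := by
      positivity
    have h4 : (1 / n : ℝ) * ∑ j, (if y j ≤ t then (1:ℝ) else 0) ≤ 1 := by
      have hs : ∑ j, (if y j ≤ t then (1:ℝ) else 0) ≤ n := by
        calc ∑ j, (if y j ≤ t then (1:ℝ) else 0) ≤ ∑ _j : Fin n, (1:ℝ) := by
              apply Finset.sum_le_sum; intro j _; split <;> norm_num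
          _ = n := by simp
      have hn0 : (0:ℝ) < n := by exact_mod_cast hn
      rw [div_mul_eq_mul_div, one_mul, div_le_one hn0]; exact hs
    rw [abs_sub_le_iff]; constructor <;> linarith
  have hB : BddAbove (Set.range f) := ⟨2, by rintro _ ⟨t, rfl⟩; exact hbdd t⟩
  have hB' : BddAbove (Set.range fun t : {t : ℝ // t ∈ S} => f (t : ℝ)) :=
    ⟨2, by rintro _ ⟨t, rfl⟩; exact hbdd _⟩
  haveI : Nonempty {t : ℝ // t ∈ S} := ⟨⟨hSne.choose, hSne.choose_spec⟩⟩
  refine le_antisymm (ciSup_le fun t => ?_) (ciSup_le fun s => le_ciSup hB (s : ℝ))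
  by_cases h : ((S.filter (fun r => r ≤ t)).Nonempty)
  · set s₀ := (S.filter (fun r => r ≤ t)).max' h with hs₀
    have hs₀mem := (S.filter (fun r => r ≤ t)).max'_mem h
    rw [Finset.mem_filter] at hs₀mem
    have hiff : ∀ u : ℝ, u ∈ S → (u ≤ t ↔ u ≤ s₀) := by
      intro u hu
      constructor
      · intro hut
        apply Finset.le_max'
        exact Finset.mem_filter.mpr ⟨hu, hut⟩
      · intro hus
        exact hus.trans hs₀mem.2
    have hxsum : (∑ i, if x i ≤ t then (1:ℝ) else 0) = ∑ i, if x i ≤ s₀ then (1:ℝ) else 0 :=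
      Finset.sum_congr rfl fun i _ => if_congr (hiff _ (hxm i)) rfl rfl
    have hysum : (∑ j, if y j ≤ t then (1:ℝ) else 0) = ∑ j, if y j ≤ s₀ then (1:ℝ) else 0 :=
      Finset.sum_congr rfl fun j _ => if_congr (hiff _ (hyn j)) rfl rfl
    have key : f t = f s₀ := by simp only [hf, hxsum, hysum]
    rw [key]
    exact le_ciSup hB' (⟨s₀, hs₀mem.1⟩ : {t : ℝ // t ∈ S})
  · have hzero : f t = 0 := by
      simp only [hf]
      have hx0 : ∀ i : Fin m, ¬ x i ≤ t := fun i hle =>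
        h ⟨x i, Finset.mem_filter.mpr ⟨hxm i, hle⟩⟩
      have hy0 : ∀ j : Fin n, ¬ y j ≤ t := fun j hle =>
        h ⟨y j, Finset.mem_filter.mpr ⟨hyn j, hle⟩⟩
      simp [hx0, hy0]
    rw [hzero]
    obtain ⟨s, hs⟩ := hSne
    exact le_trans (abs_nonneg _) (le_ciSup hB' (⟨s, hs⟩ : {t : ℝ // t ∈ S}))
end
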